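/- arXiv:1510.02215 — 9 statements merged into one kernel-verified Lean document; each statement's English description precedes it below -/
import Mathlib

section
/- Let G be a finite simple graph with N10 ≥ 1 four-cliques, and let k10 be the maximum number of 4-cliques of G sharing a common edge. Fix reals 0 < p ≤ 1, 0 < δ < 1 and ε > 0. Let Y10 be the number of 4-cliques of the random subgraph G̃ obtained by retaining each edge of G independently with probability p, and let X10 = Y10 / p^6. If p ≥ ( log(2/δ) · k10 / (2 ε² N10) )^{1/12}, then with probability at least 1 − δ one has |N10 − X10| ≤ ε · N10. -/
/-!
A 4-clique `T` of `G` survives in `G̃` exactly when its six edges are all retained, so `Y10` is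
the number of events `E_T = {all edges of T retained}` that occur, on the product space
`{0,1}^E`, and every coordinate (edge) is read by at most `k10` of these events. For such read-`k`
families the Gavinsky–Lovett–Saks–Srinivasan bound `P(|Y - E Y| > u) ≤ 2 exp(-2u² / (k N))`
holds, `N` being the number of events: Finner's generalized Hölder inequality (proved by
conditioning on one coordinate at a time) bounds `E exp(l (Y - E Y))` by
`∏_T (E exp(k l (1_{E_T} - P E_T)))^{1/k}`, and Hoeffding's lemma bounds each factor by
`exp(k l² / 8)`; Chernoff's method finishes. With `E Y10 = N10 p⁶` and `u = ε N10 p⁶`, the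
hypothesis on `p` makes `2 exp(-2u² / (k10 N10))` at most `δ`.
-/

open Finset

namespace FourProfileSparsifier

variable {V : Type*} [Fintype V] [DecidableEq V]

/-- The random subgraph of `G` keeping exactly those edges `e` with `ω e = true`. -/
def keep (G : SimpleGraph V) [DecidableRel G.Adj] (ω : G.edgeFinset → Bool) :
    SimpleGraph V where
  Adj a b := ∃ h : G.Adj a b, ω ⟨s(a, b), SimpleGraph.mem_edgeFinset.mpr h⟩ = true
  symm := by
    constructor
    rintro a b ⟨h, hw⟩
    refine ⟨h.symm, ?_⟩
    have key : (⟨s(b, a), SimpleGraph.mem_edgeFinset.mpr h.symm⟩ : G.edgeFinset) =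
        ⟨s(a, b), SimpleGraph.mem_edgeFinset.mpr h⟩ := Subtype.ext (Sym2.eq_swap)
    rw [key, hw]
  loopless := by constructor; rintro a ⟨h, -⟩; exact h.ne rfl

instance (G : SimpleGraph V) [DecidableRel G.Adj] (ω : G.edgeFinset → Bool) :
    DecidableRel (keep G ω).Adj := fun _ _ => exists_prop_decidable _

/-- `N10`: the number of 4-cliques of `G`. -/
def N10 (G : SimpleGraph V) [DecidableRel G.Adj] : ℕ := (G.cliqueFinset 4).card

/-- `k10`: the maximum number of 4-cliques of `G` sharing a common edge. -/
def k10 (G : SimpleGraph V) [DecidableRel G.Adj] : ℕ :=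
  Finset.univ.sup fun x : V × V =>
    if G.Adj x.1 x.2 then
      ((G.cliqueFinset 4).filter fun s => x.1 ∈ s ∧ x.2 ∈ s).card
    else 0

/-- `Y10 ω`: the number of 4-cliques of the sparsified graph. -/
def Y10 (G : SimpleGraph V) [DecidableRel G.Adj] (ω : G.edgeFinset → Bool) : ℕ :=
  ((keep G ω).cliqueFinset 4).card

open Classical in
/-- The probability of the event `A` under independent Bernoulli(`p`) retention of each
edge of `G`: the sample space is the set of functions `ω : E → Bool` equipped with the
product of Bernoulli(`p`) measures. -/
noncomputable def prob (G : SimpleGraph V) [DecidableRel G.Adj] (p : ℝ)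
    (A : (G.edgeFinset → Bool) → Prop) : ℝ :=
  ∑ ω : G.edgeFinset → Bool,
    if A ω then ∏ e : G.edgeFinset, (if ω e then p else 1 - p) else 0

open Function Real MeasureTheory ProbabilityTheory unitInterval

section BernoulliProduct

variable {ι : Type*} [Fintype ι] (p : ℝ)

def bernoulliWeight (ω : ι → Bool) : ℝ := ∏ i, if ω i then p else 1 - p

lemma bernoulliWeight_nonneg {p : ℝ} (hp0 : 0 ≤ p) (hp1 : p ≤ 1) (ω : ι → Bool) :
    0 ≤ bernoulliWeight p ω :=
  prod_nonneg fun i _ => by split <;> linarith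

variable [DecidableEq ι]

noncomputable def expect (f : (ι → Bool) → ℝ) : ℝ := ∑ ω, bernoulliWeight p ω * f ω

variable {p}

lemma sum_bernoulliWeight : ∑ ω : ι → Bool, bernoulliWeight p ω = 1 := by
  simpa [bernoulliWeight] using
    (Fintype.prod_sum fun (_ : ι) (b : Bool) => if b then p else 1 - p).symm

lemma expect_nonneg (hp0 : 0 ≤ p) (hp1 : p ≤ 1) {f : (ι → Bool) → ℝ} (hf : ∀ ω, 0 ≤ f ω) :
    0 ≤ expect p f :=
  sum_nonneg fun ω _ => mul_nonneg (bernoulliWeight_nonneg hp0 hp1 ω) (hf ω)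

lemma expect_mono (hp0 : 0 ≤ p) (hp1 : p ≤ 1) {f g : (ι → Bool) → ℝ} (hfg : ∀ ω, f ω ≤ g ω) :
    expect p f ≤ expect p g :=
  sum_le_sum fun ω _ => mul_le_mul_of_nonneg_left (hfg ω) (bernoulliWeight_nonneg hp0 hp1 ω)

lemma expect_add (f g : (ι → Bool) → ℝ) :
    expect p (fun ω => f ω + g ω) = expect p f + expect p g := by
  simp [expect, mul_add, sum_add_distrib]

lemma expect_const_mul (c : ℝ) (f : (ι → Bool) → ℝ) :
    expect p (fun ω => c * f ω) = c * expect p f := by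
  simp only [expect, mul_sum, mul_left_comm]

lemma expect_const (c : ℝ) : expect p (fun _ : ι → Bool => c) = c := by
  simp [expect, ← sum_mul, sum_bernoulliWeight]

lemma bernoulliWeight_update_mul (ω : ι → Bool) (i₀ : ι) (c : Bool) :
    bernoulliWeight p (update ω i₀ c) * (if ω i₀ then p else 1 - p) =
      (if c then p else 1 - p) * bernoulliWeight p ω := by
  simp only [bernoulliWeight, ← mul_prod_erase univ _ (mem_univ i₀), update_self]
  rw [prod_congr rfl fun i hi => by rw [update_of_ne (ne_of_mem_erase hi)]]
  ring

lemma expect_eq_add_update (i₀ : ι) (f : (ι → Bool) → ℝ) :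
    expect p f = p * expect p (fun ω => f (update ω i₀ true)) +
      (1 - p) * expect p (fun ω => f (update ω i₀ false)) := by
  -- reindex the sum over `(ω, c)` by an involution preserving the weight of `c` times that of `ω`
  let e : Equiv.Perm ((ι → Bool) × Bool) :=
    Involutive.toPerm (fun x => (update x.1 i₀ x.2, x.1 i₀)) (by intro x; simp)
  let F : (ι → Bool) × Bool → ℝ := fun x =>
    (if x.2 then p else 1 - p) * (bernoulliWeight p x.1 * f x.1)
  calc expect p f = ∑ x, F x := by
        simp [F, Fintype.sum_prod_type_right, expect, ← add_mul, ← mul_sum]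
    _ = ∑ x, F (e x) := (Equiv.sum_comp e F).symm
    _ = ∑ x : (ι → Bool) × Bool,
          (if x.2 then p else 1 - p) * (bernoulliWeight p x.1 * f (update x.1 i₀ x.2)) := by
        refine sum_congr rfl fun x _ => ?_
        change F (update x.1 i₀ x.2, x.1 i₀) = _
        simp only [F]
        rw [← mul_assoc, mul_comm _ (bernoulliWeight p _), bernoulliWeight_update_mul]
        ring
    _ = _ := by simp [Fintype.sum_prod_type_right, expect, mul_sum]

lemma expect_ite_forall (A : Finset ι) (x y : ℝ) :
    expect p (fun ω => if ∀ i ∈ A, ω i = true then x else y) = p ^ #A * x + (1 - p ^ #A) * y := by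
  induction A using Finset.cons_induction with
  | empty => simp [expect_const]
  | cons a A ha ih =>
    have hA : ∀ ω : ι → Bool, (∀ i ∈ A, update ω a true i = true) ↔ ∀ i ∈ A, ω i = true :=
      fun ω => forall₂_congr fun i hi => by rw [update_of_ne (ne_of_mem_of_not_mem hi ha)]
    rw [expect_eq_add_update a]
    simp only [forall_mem_cons, update_self, true_and, Bool.false_eq_true, false_and, if_false,
      expect_const, hA, ih, card_cons]
    ring

end BernoulliProduct

theorem bernoulli_centered_mgf_le {q : ℝ} (hq0 : 0 ≤ q) (hq1 : q ≤ 1) (s : ℝ) :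
    q * exp (s * (1 - q)) + (1 - q) * exp (-(s * q)) ≤ exp (s ^ 2 / 8) := by
  let X : Bool → ℝ := fun b => if b then 1 else 0
  let μ : Measure Bool := bernoulliMeasure true false ⟨q, hq0, hq1⟩
  have hX : ∀ᵐ b ∂μ, X b ∈ Set.Icc 0 1 := ae_of_all _ fun b => by cases b <;> simp [X]
  have hmean : μ[X] = q := by simp [μ, X, integral_bernoulliMeasure]
  have h := (hasSubgaussianMGF_of_mem_Icc (measurable_of_finite X).aemeasurable hX).mgf_le s
  rw [hmean, mgf, integral_bernoulliMeasure] at h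
  norm_num [X] at h
  convert h using 2; ring

lemma lintegral_bernoulliMeasure_bool (w : I) (f : Bool → ENNReal) :
    ∫⁻ c, f c ∂(bernoulliMeasure true false w) =
      ENNReal.ofReal w * f true + ENNReal.ofReal (1 - w) * f false := by
  rw [bernoulliMeasure_def, lintegral_add_measure, lintegral_smul_measure, lintegral_smul_measure,
    lintegral_dirac, lintegral_dirac, ENNReal.smul_def, ENNReal.smul_def]
  congr 2
  · exact (ENNReal.ofReal_eq_coe_nnreal w.2.1).symm
  · exact (ENNReal.ofReal_eq_coe_nnreal (unitInterval.one_minus_nonneg w)).symm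

lemma prod_ofReal_rpow {J : Type*} (s : Finset J) {x : J → ℝ} (hx : ∀ j ∈ s, 0 ≤ x j)
    {θ : ℝ} (hθ : 0 ≤ θ) :
    ∏ j ∈ s, ENNReal.ofReal (x j) ^ θ = ENNReal.ofReal (∏ j ∈ s, x j ^ θ) := by
  rw [ENNReal.ofReal_prod_of_nonneg fun j hj => rpow_nonneg (hx j hj) θ]
  exact prod_congr rfl fun j hj => ENNReal.ofReal_rpow_of_nonneg (hx j hj) hθ

/-- Hölder's inequality for the two-point law `Ber(w)`, the constant function `1` taking up the
exponent `1 - #s / k`. -/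
lemma add_prod_rpow_le_prod_add_rpow {J : Type*} {k : ℕ} (s : Finset J) (hs : #s ≤ k)
    {a b : J → ℝ} (ha : ∀ j ∈ s, 0 ≤ a j) (hb : ∀ j ∈ s, 0 ≤ b j) (w : I) :
    w * ∏ j ∈ s, a j ^ (k⁻¹ : ℝ) + (1 - w) * ∏ j ∈ s, b j ^ (k⁻¹ : ℝ)
      ≤ ∏ j ∈ s, (w * a j + (1 - w) * b j) ^ (k⁻¹ : ℝ) := by
  have hw := w.2.1
  have hw' := unitInterval.one_minus_nonneg w
  have hθ : (0 : ℝ) ≤ (k : ℝ)⁻¹ := by positivity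
  have hm : ∀ j ∈ s, 0 ≤ w * a j + (1 - w) * b j := fun j hj => by
    have := ha j hj; have := hb j hj; positivity
  have hq : 0 ≤ 1 - #s * (k⁻¹ : ℝ) := by
    rcases Nat.eq_zero_or_pos k with rfl | hk
    · simp
    · rw [sub_nonneg, ← div_eq_mul_inv, div_le_one (by positivity)]
      exact_mod_cast hs
  have key := ENNReal.lintegral_mul_prod_norm_pow_le (μ := bernoulliMeasure true false w) s
    (g := 1) (f := fun j c => ENNReal.ofReal (if c then a j else b j))
    (measurable_of_finite _).aemeasurable (fun _ _ => (measurable_of_finite _).aemeasurable)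
    (1 - #s * (k⁻¹ : ℝ)) (p := fun _ => (k⁻¹ : ℝ)) (by simp) hq (fun _ _ => hθ)
  simp only [lintegral_bernoulliMeasure_bool, Pi.one_apply, ENNReal.one_rpow, one_mul, mul_one,
    if_true, Bool.false_eq_true, if_false, ← ENNReal.ofReal_mul hw, ← ENNReal.ofReal_mul hw'] at key
  have hM : ∏ j ∈ s, (ENNReal.ofReal (w * a j) + ENNReal.ofReal ((1 - w) * b j)) ^ (k⁻¹ : ℝ) =
      ENNReal.ofReal (∏ j ∈ s, (w * a j + (1 - w) * b j) ^ (k⁻¹ : ℝ)) := by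
    rw [← prod_ofReal_rpow s hm hθ]
    refine prod_congr rfl fun j hj => ?_
    rw [ENNReal.ofReal_add (mul_nonneg hw (ha j hj)) (mul_nonneg hw' (hb j hj))]
  rw [← ENNReal.ofReal_add hw hw', add_sub_cancel, ENNReal.ofReal_one, ENNReal.one_rpow, one_mul,
    prod_ofReal_rpow s ha hθ, prod_ofReal_rpow s hb hθ, hM, ← ENNReal.ofReal_mul hw,
    ← ENNReal.ofReal_mul hw', ← ENNReal.ofReal_add
      (mul_nonneg hw (prod_nonneg fun j hj => rpow_nonneg (ha j hj) _))
      (mul_nonneg hw' (prod_nonneg fun j hj => rpow_nonneg (hb j hj) _))] at key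
  exact (ENNReal.ofReal_le_ofReal_iff (prod_nonneg fun j hj => rpow_nonneg (hm j hj) _)).mp key

lemma add_prod_rpow_le_prod_add_rpow_of_card_filter_ne {J : Type*} {k : ℕ} (s : Finset J)
    {a b : J → ℝ} (ha : ∀ j ∈ s, 0 ≤ a j) (hb : ∀ j ∈ s, 0 ≤ b j)
    (hs : #{j ∈ s | a j ≠ b j} ≤ k) (w : I) :
    w * ∏ j ∈ s, a j ^ (k⁻¹ : ℝ) + (1 - w) * ∏ j ∈ s, b j ^ (k⁻¹ : ℝ)
      ≤ ∏ j ∈ s, (w * a j + (1 - w) * b j) ^ (k⁻¹ : ℝ) := by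
  set θ : ℝ := (k : ℝ)⁻¹
  have hba : ∀ j ∈ {j ∈ s | ¬a j ≠ b j}, b j = a j := fun j hj =>
    (not_not.1 (mem_filter.1 hj).2).symm
  have hb' : ∏ j ∈ {j ∈ s | ¬a j ≠ b j}, b j ^ θ = ∏ j ∈ {j ∈ s | ¬a j ≠ b j}, a j ^ θ :=
    prod_congr rfl fun j hj => by rw [hba j hj]
  have hm' : ∏ j ∈ {j ∈ s | ¬a j ≠ b j}, (w * a j + (1 - w) * b j) ^ θ =
      ∏ j ∈ {j ∈ s | ¬a j ≠ b j}, a j ^ θ :=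
    prod_congr rfl fun j hj => by rw [hba j hj]; ring_nf
  have hr : 0 ≤ ∏ j ∈ {j ∈ s | ¬a j ≠ b j}, a j ^ θ :=
    prod_nonneg fun j hj => rpow_nonneg (ha j (mem_filter.1 hj).1) _
  have ht := add_prod_rpow_le_prod_add_rpow _ hs (fun j hj => ha j (mem_filter.1 hj).1)
    (fun j hj => hb j (mem_filter.1 hj).1) w
  rw [← prod_filter_mul_prod_filter_not s (fun j => a j ≠ b j) (fun j => a j ^ θ),
    ← prod_filter_mul_prod_filter_not s (fun j => a j ≠ b j) (fun j => b j ^ θ),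
    ← prod_filter_mul_prod_filter_not s (fun j => a j ≠ b j), hb', hm']
  linarith [mul_le_mul_of_nonneg_right ht hr]

section ReadK

variable {ι J : Type*} [Fintype ι] [DecidableEq ι] {p : ℝ} {k c : ℕ}

lemma expect_prod_le_of_forall_update (hp0 : 0 ≤ p) (hp1 : p ≤ 1) (S : Finset J)
    (g : J → (ι → Bool) → ℝ) (A : J → Finset ι) (i₀ : ι) (hg : ∀ j ∈ S, ∀ ω, 0 ≤ g j ω)
    (hA : ∀ j ∈ S, DependsOn (g j) (A j)) (hk : #{j ∈ S | i₀ ∈ A j} ≤ k)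
    (h : ∀ c, expect p (fun ω => ∏ j ∈ S, g j (update ω i₀ c)) ≤
      ∏ j ∈ S, expect p (fun ω => g j (update ω i₀ c) ^ k) ^ (k⁻¹ : ℝ)) :
    expect p (fun ω => ∏ j ∈ S, g j ω) ≤ ∏ j ∈ S, expect p (fun ω => g j ω ^ k) ^ (k⁻¹ : ℝ) := by
  set a : Bool → J → ℝ := fun c j => expect p (fun ω => g j (update ω i₀ c) ^ k)
  have ha : ∀ c, ∀ j ∈ S, 0 ≤ a c j := fun c j hj =>
    expect_nonneg hp0 hp1 fun ω => pow_nonneg (hg j hj _) k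
  have hind : ∀ j ∈ S, i₀ ∉ A j → ∀ c, a c j = expect p (fun ω => g j ω ^ k) := by
    intro j hj hi c
    congr! 3 with ω
    exact hA j hj fun i hi' => update_of_ne (ne_of_mem_of_not_mem hi' hi) _ _
  have hvary : #{j ∈ S | a true j ≠ a false j} ≤ k := by
    refine (card_le_card fun j hj => ?_).trans hk
    simp only [mem_filter] at hj ⊢
    refine ⟨hj.1, by_contra fun hi => hj.2 ?_⟩
    rw [hind j hj.1 hi, hind j hj.1 hi]
  calc expect p (fun ω => ∏ j ∈ S, g j ω)
      = p * expect p (fun ω => ∏ j ∈ S, g j (update ω i₀ true)) +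
          (1 - p) * expect p (fun ω => ∏ j ∈ S, g j (update ω i₀ false)) :=
        expect_eq_add_update i₀ _
    _ ≤ p * ∏ j ∈ S, a true j ^ (k⁻¹ : ℝ) + (1 - p) * ∏ j ∈ S, a false j ^ (k⁻¹ : ℝ) :=
        add_le_add (mul_le_mul_of_nonneg_left (h true) hp0)
          (mul_le_mul_of_nonneg_left (h false) (sub_nonneg.2 hp1))
    _ ≤ ∏ j ∈ S, (p * a true j + (1 - p) * a false j) ^ (k⁻¹ : ℝ) :=
        add_prod_rpow_le_prod_add_rpow_of_card_filter_ne S (ha true) (ha false) hvary ⟨p, hp0, hp1⟩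
    _ = ∏ j ∈ S, expect p (fun ω => g j ω ^ k) ^ (k⁻¹ : ℝ) :=
        prod_congr rfl fun j _ => by rw [expect_eq_add_update i₀ fun ω => g j ω ^ k]

/-- Finner's inequality. -/
theorem expect_prod_le_prod_expect_pow_rpow (hp0 : 0 ≤ p) (hp1 : p ≤ 1) (hk : 1 ≤ k)
    (S : Finset J) (g : J → (ι → Bool) → ℝ) (A : J → Finset ι) (hg : ∀ j ∈ S, ∀ ω, 0 ≤ g j ω)
    (hA : ∀ j ∈ S, DependsOn (g j) (A j)) (hAk : ∀ i, #{j ∈ S | i ∈ A j} ≤ k) :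
    expect p (fun ω => ∏ j ∈ S, g j ω) ≤ ∏ j ∈ S, expect p (fun ω => g j ω ^ k) ^ (k⁻¹ : ℝ) := by
  suffices ∀ u : Finset ι, ∀ (g : J → (ι → Bool) → ℝ) (A : J → Finset ι),
      (∀ j ∈ S, ∀ ω, 0 ≤ g j ω) → (∀ j ∈ S, DependsOn (g j) (A j)) →
      (∀ i, #{j ∈ S | i ∈ A j} ≤ k) → (∀ j ∈ S, A j ⊆ u) →
      expect p (fun ω => ∏ j ∈ S, g j ω) ≤ ∏ j ∈ S, expect p (fun ω => g j ω ^ k) ^ (k⁻¹ : ℝ) from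
    this univ g A hg hA hAk fun _ _ => subset_univ _
  intro u
  induction u using Finset.induction_on with
  | empty =>
    intro g A hg hA _ hAu
    let ω₀ : ι → Bool := fun _ => true
    have hconst : ∀ j ∈ S, ∀ ω, g j ω = g j ω₀ := fun j hj ω =>
      ((hA j hj).mono (by simpa using hAu j hj)).empty ω ω₀
    have hg₀ : (fun ω => ∏ j ∈ S, g j ω) = fun _ => ∏ j ∈ S, g j ω₀ :=
      funext fun ω => prod_congr rfl fun j hj => hconst j hj ω
    rw [hg₀, expect_const]
    refine le_of_eq (prod_congr rfl fun j hj => ?_)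
    have hgk : (fun ω => g j ω ^ k) = fun _ => g j ω₀ ^ k := funext fun ω => by rw [hconst j hj ω]
    rw [hgk, expect_const, ← rpow_natCast, ← rpow_mul (hg j hj ω₀),
      mul_inv_cancel₀ (by positivity), rpow_one]
  | insert i₀ u _ ih =>
    intro g A hg hA hAk hAu
    refine expect_prod_le_of_forall_update hp0 hp1 S g A i₀ hg hA (hAk i₀) fun c => ?_
    refine ih (fun j ω => g j (update ω i₀ c)) (fun j => (A j).erase i₀) (fun j hj ω => hg j hj _)
      (fun j hj => by simpa using (hA j hj).update i₀ c) (fun i => ?_) (fun j hj => ?_)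
    · refine (card_le_card fun j hj => ?_).trans (hAk i)
      simp only [mem_filter, mem_erase] at hj ⊢
      exact ⟨hj.1, hj.2.2⟩
    · intro i hi
      exact (mem_insert.1 (hAu j hj (mem_of_mem_erase hi))).resolve_left (ne_of_mem_erase hi)

def countAllTrue (S : Finset J) (A : J → Finset ι) (ω : ι → Bool) : ℕ :=
  #{j ∈ S | ∀ i ∈ A j, ω i = true}

lemma expect_exp_mul_indicator_sub_pow_le (hp0 : 0 ≤ p) (hp1 : p ≤ 1) (A : Finset ι) (l : ℝ)
    (n : ℕ) :
    expect p (fun ω => exp (l * ((if ∀ i ∈ A, ω i = true then 1 else 0) - p ^ #A)) ^ n) ≤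
      exp ((n * l) ^ 2 / 8) := by
  have h : (fun ω : ι → Bool => exp (l * ((if ∀ i ∈ A, ω i = true then 1 else 0) - p ^ #A)) ^ n) =
      fun ω => if ∀ i ∈ A, ω i = true then exp (n * l * (1 - p ^ #A))
        else exp (-(n * l * p ^ #A)) := by
    ext ω
    rw [← exp_nat_mul]
    split <;> ring_nf
  rw [h, expect_ite_forall]
  exact bernoulli_centered_mgf_le (pow_nonneg hp0 _) (pow_le_one₀ hp0 hp1) _

theorem expect_exp_mul_countAllTrue_sub_le (hp0 : 0 ≤ p) (hp1 : p ≤ 1) (hk : 1 ≤ k)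
    (S : Finset J) (A : J → Finset ι) (hAk : ∀ i, #{j ∈ S | i ∈ A j} ≤ k)
    (hc : ∀ j ∈ S, #(A j) = c) (l : ℝ) :
    expect p (fun ω => exp (l * (countAllTrue S A ω - #S * p ^ c))) ≤
      exp (l ^ 2 * (k * #S) / 8) := by
  set g : J → (ι → Bool) → ℝ := fun j ω =>
    exp (l * ((if ∀ i ∈ A j, ω i = true then 1 else 0) - p ^ c))
  have hprod : ∀ ω, exp (l * (countAllTrue S A ω - #S * p ^ c)) = ∏ j ∈ S, g j ω := by
    intro ω
    simp only [g, ← exp_sum, ← mul_sum, sum_sub_distrib, countAllTrue, card_filter]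
    push_cast
    simp
  have hA : ∀ j ∈ S, DependsOn (g j) (A j) := fun j _ ω ω' h => by
    have hiff : (∀ i ∈ A j, ω i = true) ↔ ∀ i ∈ A j, ω' i = true :=
      forall₂_congr fun i hi => by rw [h i hi]
    simp only [g, hiff]
  have hfactor : ∀ j ∈ S, expect p (fun ω => g j ω ^ k) ^ (k⁻¹ : ℝ) ≤ exp (l ^ 2 * k / 8) := by
    intro j hj
    have hk0 : (k : ℝ) ≠ 0 := by positivity
    calc expect p (fun ω => g j ω ^ k) ^ (k⁻¹ : ℝ) ≤ exp ((k * l) ^ 2 / 8) ^ (k⁻¹ : ℝ) := by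
          refine rpow_le_rpow (expect_nonneg hp0 hp1 fun _ => by positivity) ?_ (by positivity)
          simpa only [g, ← hc j hj] using expect_exp_mul_indicator_sub_pow_le hp0 hp1 (A j) l k
      _ = exp (l ^ 2 * k / 8) := by rw [← exp_mul]; field_simp
  calc _ = expect p (fun ω => ∏ j ∈ S, g j ω) := by simp only [hprod]
    _ ≤ ∏ j ∈ S, expect p (fun ω => g j ω ^ k) ^ (k⁻¹ : ℝ) :=
        expect_prod_le_prod_expect_pow_rpow hp0 hp1 hk S g A (fun _ _ _ => (exp_pos _).le) hA hAk
    _ ≤ ∏ j ∈ S, exp (l ^ 2 * k / 8) :=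
        prod_le_prod (fun _ _ => rpow_nonneg (expect_nonneg hp0 hp1 fun _ => by positivity) _)
          hfactor
    _ = _ := by rw [prod_const, ← exp_nat_mul]; ring_nf

lemma expect_indicator_lt_le_of_expect_exp_le (hp0 : 0 ≤ p) (hp1 : p ≤ 1)
    {Z : (ι → Bool) → ℝ} {K u : ℝ} (hK : 0 < K) (hu : 0 ≤ u)
    (hZ : ∀ l, expect p (fun ω => exp (l * Z ω)) ≤ exp (l ^ 2 * K / 8)) :
    expect p (fun ω => if u < Z ω then 1 else 0) ≤ exp (-(2 * u ^ 2 / K)) := by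
  -- the minimiser of `-l u + l² K / 8`
  set l := 4 * u / K
  have hl : 0 ≤ l := by positivity
  have hmarkov : ∀ ω, (if u < Z ω then 1 else 0) ≤ exp (-(l * u)) * exp (l * Z ω) := by
    intro ω
    rw [← exp_add]
    split_ifs with h
    · exact one_le_exp (by nlinarith)
    · exact (exp_pos _).le
  calc _ ≤ expect p (fun ω => exp (-(l * u)) * exp (l * Z ω)) := expect_mono hp0 hp1 hmarkov
    _ = exp (-(l * u)) * expect p (fun ω => exp (l * Z ω)) := expect_const_mul _ _
    _ ≤ exp (-(l * u)) * exp (l ^ 2 * K / 8) := by gcongr; exact hZ l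
    _ = exp (-(2 * u ^ 2 / K)) := by rw [← exp_add]; congr 1; simp only [l]; field_simp; ring

/-- The read-`k` Hoeffding inequality of Gavinsky, Lovett, Saks and Srinivasan. -/
theorem expect_indicator_lt_abs_countAllTrue_sub_le (hp0 : 0 ≤ p) (hp1 : p ≤ 1) (hk : 1 ≤ k)
    (S : Finset J) (hS : S.Nonempty) (A : J → Finset ι) (hAk : ∀ i, #{j ∈ S | i ∈ A j} ≤ k)
    (hc : ∀ j ∈ S, #(A j) = c) {u : ℝ} (hu : 0 ≤ u) :
    expect p (fun ω => if u < |countAllTrue S A ω - #S * p ^ c| then 1 else 0) ≤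
      2 * exp (-(2 * u ^ 2 / (k * #S))) := by
  have hK : (0 : ℝ) < k * #S := by have := hS.card_pos; positivity
  set Z : (ι → Bool) → ℝ := fun ω => countAllTrue S A ω - #S * p ^ c
  have hZ := expect_exp_mul_countAllTrue_sub_le hp0 hp1 hk S A hAk hc
  have hupper := expect_indicator_lt_le_of_expect_exp_le hp0 hp1 hK hu hZ
  have hlower := expect_indicator_lt_le_of_expect_exp_le (Z := fun ω => -Z ω) hp0 hp1 hK hu
    fun l => by simpa [mul_neg, neg_mul] using hZ (-l)
  have hsplit : ∀ ω, (if u < |Z ω| then (1 : ℝ) else 0) ≤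
      (if u < Z ω then 1 else 0) + (if u < -Z ω then 1 else 0) := by
    intro ω
    split_ifs with h <;> norm_num
    rcases lt_abs.1 h with h' | h' <;> contradiction
  calc _ ≤ expect p (fun ω => (if u < Z ω then 1 else 0) + (if u < -Z ω then 1 else 0)) :=
        expect_mono hp0 hp1 hsplit
    _ ≤ _ := by rw [expect_add]; linarith

end ReadK

section Graph

variable (G : SimpleGraph V) [DecidableRel G.Adj]

def edgesWithin (T : Finset V) : Finset G.edgeFinset := {e | (e : Sym2 V) ∈ T.sym2}

lemma map_edgesWithin_of_isClique {T : Finset V} (hT : G.IsClique T) :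
    (edgesWithin G T).map (Embedding.subtype _) = T.offDiag.image Sym2.mk.uncurry := by
  rw [← Sym2.filter_image_mk_not_isDiag, ← sym2_eq_image]
  ext z
  induction z using Sym2.ind with
  | _ a b =>
  simpa [edgesWithin] using fun ha hb => ⟨G.ne_of_adj, hT ha hb⟩

lemma card_edgesWithin_of_isNClique {n : ℕ} {T : Finset V} (hT : G.IsNClique n T) :
    #(edgesWithin G T) = n.choose 2 := by
  rw [← card_map, map_edgesWithin_of_isClique G hT.isClique, Sym2.card_image_offDiag, hT.card_eq]

lemma isClique_keep_iff (ω : G.edgeFinset → Bool) (T : Finset V) :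
    (keep G ω).IsClique T ↔ G.IsClique T ∧ ∀ e ∈ edgesWithin G T, ω e = true := by
  constructor
  · refine fun h => ⟨h.mono fun _ _ (hab : (keep G ω).Adj _ _) => hab.1, ?_⟩
    rintro ⟨e, he⟩ heT
    induction e using Sym2.ind with
    | _ a b =>
    simp only [edgesWithin, mem_filter, mem_univ, true_and, mk_mem_sym2_iff] at heT
    exact (h heT.1 heT.2 (G.ne_of_adj (SimpleGraph.mem_edgeFinset.1 he))).2
  · rintro ⟨hG, hω⟩ a ha b hb hab
    exact ⟨hG ha hb hab, hω _ (by simpa [edgesWithin] using ⟨ha, hb⟩)⟩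

lemma keep_cliqueFinset (n : ℕ) (ω : G.edgeFinset → Bool) :
    (keep G ω).cliqueFinset n = {T ∈ G.cliqueFinset n | ∀ e ∈ edgesWithin G T, ω e = true} := by
  ext T
  simp only [mem_filter, SimpleGraph.mem_cliqueFinset_iff, SimpleGraph.isNClique_iff,
    isClique_keep_iff]
  tauto

lemma card_filter_mem_mem_le_k10 {a b : V} (h : G.Adj a b) :
    #{T ∈ G.cliqueFinset 4 | a ∈ T ∧ b ∈ T} ≤ k10 G := by
  rw [k10]
  simpa [h] using le_sup (f := fun x : V × V => if G.Adj x.1 x.2 then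
    #{T ∈ G.cliqueFinset 4 | x.1 ∈ T ∧ x.2 ∈ T} else 0) (mem_univ (a, b))

lemma card_filter_mem_edgesWithin_le_k10 (e : G.edgeFinset) :
    #{T ∈ G.cliqueFinset 4 | e ∈ edgesWithin G T} ≤ k10 G := by
  obtain ⟨e, he⟩ := e
  induction e using Sym2.ind with
  | _ a b =>
  simpa [edgesWithin] using card_filter_mem_mem_le_k10 G (SimpleGraph.mem_edgeFinset.1 he)

lemma one_le_k10 (hN : 1 ≤ N10 G) : 1 ≤ k10 G := by
  obtain ⟨T, hT⟩ := card_pos.1 hN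
  have hT4 := SimpleGraph.mem_cliqueFinset_iff.1 hT
  obtain ⟨a, ha, b, hb, hab⟩ := one_lt_card.1 (by rw [hT4.card_eq]; norm_num : 1 < #T)
  exact (card_pos.2 ⟨T, mem_filter.2 ⟨hT, ha, hb⟩⟩).trans_le
    (card_filter_mem_mem_le_k10 G (hT4.isClique ha hb hab))

lemma Y10_eq_countAllTrue (ω : G.edgeFinset → Bool) :
    Y10 G ω = countAllTrue (G.cliqueFinset 4) (edgesWithin G) ω := by
  rw [Y10, keep_cliqueFinset, countAllTrue]

theorem expect_indicator_lt_abs_Y10_sub_le {p : ℝ} (hp0 : 0 ≤ p) (hp1 : p ≤ 1) (hN : 1 ≤ N10 G)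
    {u : ℝ} (hu : 0 ≤ u) :
    expect p (fun ω => if u < |(Y10 G ω : ℝ) - N10 G * p ^ 6| then 1 else 0) ≤
      2 * exp (-(2 * u ^ 2 / (k10 G * N10 G))) := by
  simpa only [Y10_eq_countAllTrue, N10] using expect_indicator_lt_abs_countAllTrue_sub_le hp0 hp1
    (one_le_k10 G hN) (G.cliqueFinset 4) (card_pos.1 hN) (edgesWithin G)
    (card_filter_mem_edgesWithin_le_k10 G) (c := 6)
    (fun T hT => card_edgesWithin_of_isNClique G (SimpleGraph.mem_cliqueFinset_iff.1 hT)) hu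

lemma prob_eq_one_sub_expect (p : ℝ) (A : (G.edgeFinset → Bool) → Prop) [DecidablePred A] :
    prob G p A = 1 - expect p (fun ω => if A ω then 0 else 1) := by
  have hprob : prob G p A = expect p (fun ω => if A ω then 1 else 0) := by
    simp only [prob, expect, bernoulliWeight, mul_ite, mul_one, mul_zero]
    convert rfl
  have hone : (fun ω => (if A ω then 1 else 0) + if A ω then 0 else 1) = fun _ => (1 : ℝ) :=
    funext fun ω => by split_ifs <;> norm_num
  have hsum := expect_add (p := p) (fun ω => if A ω then 1 else 0) (fun ω => if A ω then 0 else 1)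
  rw [hone, expect_const] at hsum
  linarith

end Graph

lemma lt_abs_sub_mul_of_not_abs_sub_div_le {N Y ε q : ℝ} (hq : 0 < q)
    (h : ¬|N - Y / q| ≤ ε * N) : ε * N * q < |Y - N * q| :=
  calc ε * N * q = q * (ε * N) := by ring
    _ < q * |N - Y / q| := mul_lt_mul_of_pos_left (not_le.1 h) hq
    _ = |q * (N - Y / q)| := by rw [abs_mul, abs_of_pos hq]
    _ = |Y - N * q| := by
      rw [← abs_neg]
      congr 1
      field_simp
      ring

lemma two_mul_exp_neg_le {N k ε δ p : ℝ} (hN : 0 < N) (hk : 0 < k) (hε : 0 < ε) (hδ0 : 0 < δ)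
    (hδ1 : δ < 1) (hp : (log (2 / δ) * k / (2 * ε ^ 2 * N)) ^ ((1 : ℝ) / 12) ≤ p) :
    2 * exp (-(2 * (ε * N * p ^ 6) ^ 2 / (k * N))) ≤ δ := by
  have hlog : 0 ≤ log (2 / δ) := log_nonneg (by rw [le_div_iff₀ hδ0]; linarith)
  have hp12 : log (2 / δ) * k / (2 * ε ^ 2 * N) ≤ p ^ 12 := by
    have := pow_le_pow_left₀ (rpow_nonneg (by positivity) _) hp 12
    rw [← rpow_natCast, ← rpow_mul (by positivity)] at this
    norm_num at this
    exact this
  have hexp : log (2 / δ) ≤ 2 * (ε * N * p ^ 6) ^ 2 / (k * N) := by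
    rw [div_le_iff₀ (by positivity)] at hp12
    rw [le_div_iff₀ (by positivity)]
    nlinarith
  calc 2 * exp (-(2 * (ε * N * p ^ 6) ^ 2 / (k * N))) ≤ 2 * exp (-log (2 / δ)) := by gcongr
    _ = δ := by rw [exp_neg, exp_log (by positivity)]; field_simp

theorem statement0 (G : SimpleGraph V) [DecidableRel G.Adj]
    (p ε δ : ℝ) (hp0 : 0 < p) (hp1 : p ≤ 1) (hδ0 : 0 < δ) (hδ1 : δ < 1) (hε : 0 < ε)
    (hN : 1 ≤ N10 G)
    (hp : (Real.log (2 / δ) * (k10 G : ℝ) / (2 * ε ^ 2 * (N10 G : ℝ))) ^ ((1 : ℝ) / 12) ≤ p) :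
    1 - δ ≤
      prob G p (fun ω => |(N10 G : ℝ) - (Y10 G ω : ℝ) / p ^ 6| ≤ ε * (N10 G : ℝ)) := by
  have hbad : ∀ ω, (if |(N10 G : ℝ) - Y10 G ω / p ^ 6| ≤ ε * N10 G then (0 : ℝ) else 1) ≤
      if ε * N10 G * p ^ 6 < |(Y10 G ω : ℝ) - N10 G * p ^ 6| then 1 else 0 := fun ω => by
    split_ifs with hgood hfar hfar <;> norm_num
    exact hfar (lt_abs_sub_mul_of_not_abs_sub_div_le (by positivity) hgood)
  have htail := expect_indicator_lt_abs_Y10_sub_le G hp0.le hp1 hN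
    (u := ε * N10 G * p ^ 6) (by positivity)
  have hδ := two_mul_exp_neg_le (by exact_mod_cast hN) (by exact_mod_cast one_le_k10 G hN) hε
    hδ0 hδ1 hp
  rw [prob_eq_one_sub_expect]
  linarith [expect_mono hp0.le hp1 hbad]

end FourProfileSparsifier
end

section
/- Let m ≥ 3 and γ ≥ 1 be reals, let N10 ≥ 1 and k10 ≥ 1 be reals with k10 ≤ N10^{5/6}, and set a6 = 8^6 · √(6!). Then for every real p with 1/log(m) ≤ p ≤ 1, the read-k error bound is at most the Kim–Vu error bound: log(2 · m^γ) · k10 / (2 p^{12} N10) ≤ a6² · ( log(m^{5+γ}) )^{12} · max{ N10^{−1/6}, (k10/N10)^{1/3} } / p. -/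
/-!
With `L = log m`, the hypothesis `1 / L ≤ p` says `L p ≥ 1`, so `L p ≤ (L p) ^ 12`. Bounding
`log (2 m ^ γ) ≤ (1 + γ) L`, `log (m ^ (5 + γ)) = (5 + γ) L` and the maximum from below by
`k10 / N10` (which lies in `[0, 1]` because `k10 ≤ N10 ^ (5/6) ≤ N10`), both sides become multiples
of `k10 / (N10 p ^ 13)`, and the comparison reduces to
`(1 + γ) (L p) ≤ 2 · 8 ^ 12 · 720 · (5 + γ) ^ 12 · (L p) ^ 12`.
-/

open Real

lemma one_le_log_of_three_le {m : ℝ} (hm : 3 ≤ m) : 1 ≤ log m := by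
  rw [le_log_iff_exp_le (by linarith)]
  linarith [exp_one_lt_d9]

lemma log_two_mul_rpow_le {m : ℝ} (hm : 2 ≤ m) (γ : ℝ) :
    log (2 * m ^ γ) ≤ (1 + γ) * log m := by
  have hm0 : 0 < m := by linarith
  have h2 : log 2 ≤ log m := log_le_log two_pos hm
  rw [log_mul two_ne_zero (rpow_pos_of_pos hm0 γ).ne', log_rpow hm0]
  linarith

lemma mul_le_mul_pow_of_one_le {a b t : ℝ} (hab : a ≤ b) (hb : 0 ≤ b) (ht : 1 ≤ t)
    {n : ℕ} (hn : n ≠ 0) : a * t ≤ b * t ^ n :=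
  mul_le_mul hab (le_self_pow₀ ht hn) (by linarith) hb

lemma sq_mul_sqrt (a x : ℝ) (hx : 0 ≤ x) : (a * √x) ^ 2 = a ^ 2 * x := by
  rw [mul_pow, sq_sqrt hx]

theorem statement2_general (m γ N10 k10 : ℝ) (hm : 3 ≤ m) (hγ : 1 ≤ γ)
    (hN : 1 ≤ N10) (hk1 : 1 ≤ k10) (hk : k10 ≤ N10 ^ ((5 : ℝ) / 6))
    (p : ℝ) (hp1 : 1 / Real.log m ≤ p) :
    Real.log (2 * m ^ γ) * k10 / (2 * p ^ 12 * N10) ≤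
      (8 ^ 6 * Real.sqrt (Nat.factorial 6 : ℝ)) ^ 2 * (Real.log (m ^ (5 + γ))) ^ 12 *
        max (N10 ^ (-(1 : ℝ) / 6)) ((k10 / N10) ^ ((1 : ℝ) / 3)) / p := by
  set L := log m
  have hL : 1 ≤ L := one_le_log_of_three_le hm
  have hp : 0 < p := lt_of_lt_of_le (by positivity) hp1
  have hLp : 1 ≤ L * p := by rwa [div_le_iff₀ (by positivity), mul_comm] at hp1
  have hr : k10 / N10 ≤ 1 :=
    (div_le_one (by positivity)).mpr (hk.trans (rpow_le_self_of_one_le hN (by norm_num)))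
  have hr_max : k10 / N10 ≤ max (N10 ^ (-(1 : ℝ) / 6)) ((k10 / N10) ^ ((1 : ℝ) / 3)) :=
    le_max_of_le_right (self_le_rpow_of_le_one (by positivity) hr (by norm_num))
  have hconst : 1 + γ ≤ 2 * ((8 : ℝ) ^ 12 * 720) * (5 + γ) ^ 12 :=
    calc 1 + γ ≤ 5 + γ := by linarith
      _ ≤ (5 + γ) ^ 12 := le_self_pow₀ (by linarith) (by norm_num)
      _ ≤ 2 * ((8 : ℝ) ^ 12 * 720) * (5 + γ) ^ 12 :=
        le_mul_of_one_le_left (by positivity) (by norm_num)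
  have hscalar := mul_le_mul_pow_of_one_le hconst (by positivity) hLp (n := 12) (by norm_num)
  calc log (2 * m ^ γ) * k10 / (2 * p ^ 12 * N10)
      ≤ (1 + γ) * L * k10 / (2 * p ^ 12 * N10) := by
        gcongr
        exact log_two_mul_rpow_le (by linarith) γ
    _ = (1 + γ) * (L * p) * (k10 / N10) / (2 * p ^ 13) := by field_simp
    _ ≤ 2 * ((8 : ℝ) ^ 12 * 720) * (5 + γ) ^ 12 * (L * p) ^ 12 * (k10 / N10) /
          (2 * p ^ 13) := by gcongr
    _ = (8 : ℝ) ^ 12 * 720 * ((5 + γ) * L) ^ 12 * (k10 / N10) / p := by field_simp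
    _ ≤ _ := by
        rw [log_rpow (by linarith), sq_mul_sqrt _ _ (by positivity), ← pow_mul]
        rw [show ((Nat.factorial 6 : ℕ) : ℝ) = 720 by norm_num [Nat.factorial]]
        gcongr

/-- Comparison of the read-k and Kim–Vu sparsifier accuracy bounds for 4-cliques:
for a graph with `m` edges, `N10` 4-cliques and at most `k10` 4-cliques sharing a
common edge, with failure probability `δ = m ^ (-γ)`, the squared relative accuracy
guaranteed by the read-k bound (left) is at most the one guaranteed by the Kim–Vu
bound (right), where `a6 = 8 ^ 6 * √(6!)`. -/
theorem statement2 (m γ N10 k10 : ℝ) (hm : 3 ≤ m) (hγ : 1 ≤ γ)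
    (hN : 1 ≤ N10) (hk1 : 1 ≤ k10) (hk : k10 ≤ N10 ^ ((5 : ℝ) / 6))
    (p : ℝ) (hp1 : 1 / Real.log m ≤ p) (hp2 : p ≤ 1) :
    Real.log (2 * m ^ γ) * k10 / (2 * p ^ 12 * N10) ≤
      (8 ^ 6 * Real.sqrt (Nat.factorial 6 : ℝ)) ^ 2 * (Real.log (m ^ (5 + γ))) ^ 12 *
        max (N10 ^ (-(1 : ℝ) / 6)) ((k10 / N10) ^ ((1 : ℝ) / 3)) / p :=
  statement2_general m γ N10 k10 hm hγ hN hk1 hk p hp1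
end

section
/- Let G be a finite simple graph with vertex set V. For every vertex v: the sum over all neighbors a of v of binomial(n1e(v,a), 2) equals F1(v) + F2(v). -/
/-!
Every 3-set counted by `F1 v` or `F2 v` contains exactly one neighbour `a` of `v`, and its other two
vertices are adjacent to neither `v` nor `a`. Conversely, a neighbour `a` together with any two
vertices outside `Γ(v) ∪ Γ(a)` forms such a 3-set, counted by `F1` or by `F2` according as those two
vertices are non-adjacent or adjacent. So both sides count the pairs `(a, {b, c})`.
-/

open Finset
open scoped Classical

namespace FourProfiles

variable {V : Type*} [Fintype V] [DecidableEq V]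

/-- Number of 3-element subsets of `V \ {v}` admitting a labeling `a, b, c` satisfying `P`. -/
noncomputable def cnt3 (v : V) (P : V → V → V → Prop) : ℕ :=
  (((Finset.univ : Finset V).powersetCard 3).filter
    (fun s => v ∉ s ∧ ∃ a ∈ s, ∃ b ∈ s, ∃ c ∈ s, s = {a, b, c} ∧ P a b c)).card

variable (G : SimpleGraph V)

/-- Induced subgraph on `{v,a,b,c}` has exactly one edge, with `v` an endpoint. -/
noncomputable def F1 (v : V) : ℕ := cnt3 v fun a b c =>
  G.Adj v a ∧ ¬G.Adj v b ∧ ¬G.Adj v c ∧ ¬G.Adj a b ∧ ¬G.Adj a c ∧ ¬G.Adj b c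

/-- Induced subgraph on `{v,a,b,c}` is a perfect matching (two disjoint edges). -/
noncomputable def F2 (v : V) : ℕ := cnt3 v fun a b c =>
  G.Adj v a ∧ G.Adj b c ∧ ¬G.Adj v b ∧ ¬G.Adj v c ∧ ¬G.Adj a b ∧ ¬G.Adj a c

/-- Two-edge path plus isolated vertex, `v` an endpoint of the path. -/
noncomputable def F3 (v : V) : ℕ := cnt3 v fun a b c =>
  G.Adj v a ∧ G.Adj a b ∧ ¬G.Adj v b ∧ ¬G.Adj v c ∧ ¬G.Adj a c ∧ ¬G.Adj b c

/-- Two-edge path plus isolated vertex, `v` the middle vertex of the path. -/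
noncomputable def F3' (v : V) : ℕ := cnt3 v fun a b c =>
  G.Adj v a ∧ G.Adj v b ∧ ¬G.Adj a b ∧ ¬G.Adj v c ∧ ¬G.Adj a c ∧ ¬G.Adj b c

/-- Path on four vertices, `v` an endpoint. -/
noncomputable def F4 (v : V) : ℕ := cnt3 v fun a b c =>
  G.Adj v a ∧ G.Adj a b ∧ G.Adj b c ∧ ¬G.Adj v b ∧ ¬G.Adj v c ∧ ¬G.Adj a c

/-- Path on four vertices, `v` an internal (degree-2) vertex. -/
noncomputable def F4' (v : V) : ℕ := cnt3 v fun a b c =>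
  G.Adj v a ∧ G.Adj v b ∧ G.Adj b c ∧ ¬G.Adj a b ∧ ¬G.Adj v c ∧ ¬G.Adj a c

/-- Triangle plus isolated vertex, `v` in the triangle. -/
noncomputable def F5 (v : V) : ℕ := cnt3 v fun a b c =>
  G.Adj v a ∧ G.Adj v b ∧ G.Adj a b ∧ ¬G.Adj v c ∧ ¬G.Adj a c ∧ ¬G.Adj b c

/-- Star `K_{1,3}`, `v` a leaf. -/
noncomputable def F6 (v : V) : ℕ := cnt3 v fun a b c =>
  G.Adj v a ∧ G.Adj a b ∧ G.Adj a c ∧ ¬G.Adj v b ∧ ¬G.Adj v c ∧ ¬G.Adj b c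

/-- Star `K_{1,3}`, `v` the center. -/
noncomputable def F6' (v : V) : ℕ := cnt3 v fun a b c =>
  G.Adj v a ∧ G.Adj v b ∧ G.Adj v c ∧ ¬G.Adj a b ∧ ¬G.Adj a c ∧ ¬G.Adj b c

/-- 4-cycle. -/
noncomputable def F7 (v : V) : ℕ := cnt3 v fun a b c =>
  G.Adj v a ∧ G.Adj a b ∧ G.Adj b c ∧ G.Adj v c ∧ ¬G.Adj v b ∧ ¬G.Adj a c

/-- Paw (triangle with a pendant edge), `v` the pendant (degree-1) vertex. -/
noncomputable def F8 (v : V) : ℕ := cnt3 v fun a b c =>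
  G.Adj v a ∧ G.Adj a b ∧ G.Adj a c ∧ G.Adj b c ∧ ¬G.Adj v b ∧ ¬G.Adj v c

/-- Paw, `v` the degree-3 vertex. -/
noncomputable def F8' (v : V) : ℕ := cnt3 v fun a b c =>
  G.Adj v a ∧ G.Adj v b ∧ G.Adj a b ∧ G.Adj v c ∧ ¬G.Adj a c ∧ ¬G.Adj b c

/-- Paw, `v` one of the two degree-2 vertices. -/
noncomputable def F8'' (v : V) : ℕ := cnt3 v fun a b c =>
  G.Adj v a ∧ G.Adj v b ∧ G.Adj a b ∧ G.Adj a c ∧ ¬G.Adj v c ∧ ¬G.Adj b c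

/-- Diamond (`K4` minus one edge), `v` one of the two degree-2 vertices. -/
noncomputable def F9 (v : V) : ℕ := cnt3 v fun a b c =>
  G.Adj v a ∧ G.Adj v b ∧ G.Adj a b ∧ G.Adj a c ∧ G.Adj b c ∧ ¬G.Adj v c

/-- Diamond, `v` one of the two degree-3 vertices. -/
noncomputable def F9' (v : V) : ℕ := cnt3 v fun a b c =>
  G.Adj v a ∧ G.Adj v b ∧ G.Adj v c ∧ G.Adj a b ∧ G.Adj a c ∧ ¬G.Adj b c

/-- Complete graph `K4`. -/
noncomputable def F10 (v : V) : ℕ := cnt3 v fun a b c =>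
  G.Adj v a ∧ G.Adj v b ∧ G.Adj v c ∧ G.Adj a b ∧ G.Adj a c ∧ G.Adj b c

/-- `|V \ (Γ(v) ∪ Γ(a))|`. -/
noncomputable def n1e (v a : V) : ℕ :=
  (Finset.univ.filter fun x => ¬G.Adj v x ∧ ¬G.Adj a x).card

/-- `|Γ(v) \ (Γ(a) ∪ {a})|`. -/
noncomputable def n2c (v a : V) : ℕ :=
  (Finset.univ.filter fun x => G.Adj v x ∧ ¬G.Adj a x ∧ x ≠ a).card

/-- `|Γ(a) \ (Γ(v) ∪ {v})|`. -/
noncomputable def n2e (v a : V) : ℕ :=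
  (Finset.univ.filter fun x => G.Adj a x ∧ ¬G.Adj v x ∧ x ≠ v).card

/-- `|Γ(v) ∩ Γ(a)|`. -/
noncomputable def n3 (v a : V) : ℕ :=
  (Finset.univ.filter fun x => G.Adj v x ∧ G.Adj a x).card

/-- Number of edges of `G` with neither endpoint in `Γ(v) ∪ {v}`. -/
noncomputable def n1d (v : V) : ℕ :=
  (((Finset.univ : Finset V).powersetCard 2).filter
    (fun s => ∃ a ∈ s, ∃ b ∈ s, s = {a, b} ∧ G.Adj a b ∧
      ¬G.Adj v a ∧ ¬G.Adj v b ∧ a ≠ v ∧ b ≠ v)).card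

/-- Number of triangles of `G` containing `a`. -/
noncomputable def tri (a : V) : ℕ :=
  (((Finset.univ : Finset V).powersetCard 2).filter
    (fun s => ∃ x ∈ s, ∃ y ∈ s, s = {x, y} ∧ G.Adj a x ∧ G.Adj a y ∧ G.Adj x y)).card

/-- Number of 2-element subsets `{x,y}` of `V \ {a}` inducing a two-edge path with `a`
an endpoint. -/
noncomputable def twoPathEnd (a : V) : ℕ :=
  (((Finset.univ : Finset V).powersetCard 2).filter
    (fun s => a ∉ s ∧ ∃ x ∈ s, ∃ y ∈ s, s = {x, y} ∧ G.Adj a x ∧ G.Adj x y ∧ ¬G.Adj a y)).card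

/-- Number of 2-element subsets `{b,c} ⊆ Γ(a)` with `b` adjacent to `c`, `b ∈ Γ(v)`,
`c ∈ Γ(v)`. -/
noncomputable def triIn (v a : V) : ℕ :=
  (((Finset.univ : Finset V).powersetCard 2).filter
    (fun s => ∃ b ∈ s, ∃ c ∈ s, s = {b, c} ∧ G.Adj a b ∧ G.Adj a c ∧ G.Adj b c ∧
      G.Adj v b ∧ G.Adj v c)).card

/-- Number of 2-element subsets `{b,c} ⊆ Γ(a)` with `b` adjacent to `c`, `b ∉ Γ(v)`,
`c ∉ Γ(v)`. -/
noncomputable def triOut (v a : V) : ℕ :=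
  (((Finset.univ : Finset V).powersetCard 2).filter
    (fun s => ∃ b ∈ s, ∃ c ∈ s, s = {b, c} ∧ G.Adj a b ∧ G.Adj a c ∧ G.Adj b c ∧
      ¬G.Adj v b ∧ ¬G.Adj v c)).card

theorem _root_.SimpleGraph.isIndepSet_pair_iff {W : Type*} (H : SimpleGraph W) {b c : W} :
    H.IsIndepSet ({b, c} : Set W) ↔ ¬H.Adj b c := by
  rw [SimpleGraph.isIndepSet_iff, Set.pairwise_pair]
  refine ⟨fun h hbc => ?_, fun h _ => ⟨h, fun hcb => h hcb.symm⟩⟩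
  exact (h hbc.ne).1 hbc

theorem cnt3_congr {v : V} {P P' : V → V → V → Prop} (h : ∀ a b c, P a b c ↔ P' a b c) :
    cnt3 v P = cnt3 v P' := by
  simp only [cnt3, h]

noncomputable def commonNonNeighbors (v a : V) : Finset V :=
  univ.filter fun x => ¬G.Adj v x ∧ ¬G.Adj a x

omit [DecidableEq V] in
theorem card_commonNonNeighbors (v a : V) : #(commonNonNeighbors G v a) = n1e G v a := rfl

omit [DecidableEq V] in
theorem mem_commonNonNeighbors {v a x : V} :
    x ∈ commonNonNeighbors G v a ↔ ¬G.Adj v x ∧ ¬G.Adj a x := by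
  simp [commonNonNeighbors]

omit [DecidableEq V] in
theorem notMem_commonNonNeighbors_of_adj {v a x : V} (h : G.Adj v x) :
    x ∉ commonNonNeighbors G v a :=
  fun hx => ((mem_commonNonNeighbors G).1 hx).1 h

noncomputable def pendantPairs (v : V) : Finset (Σ _ : V, Finset V) :=
  (univ.filter (G.Adj v)).sigma fun a => (commonNonNeighbors G v a).powersetCard 2

omit [DecidableEq V] in
theorem mem_pendantPairs {v : V} {p : Σ _ : V, Finset V} :
    p ∈ pendantPairs G v ↔ G.Adj v p.1 ∧ p.2 ⊆ commonNonNeighbors G v p.1 ∧ #p.2 = 2 := by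
  simp [pendantPairs]

omit [DecidableEq V] in
theorem card_pendantPairs [DecidableRel G.Adj] (v : V) :
    #(pendantPairs G v) = ∑ a ∈ G.neighborFinset v, (n1e G v a).choose 2 := by
  rw [pendantPairs, card_sigma]
  refine sum_congr (by ext; simp) fun a _ => ?_
  rw [card_powersetCard, card_commonNonNeighbors]

theorem injOn_insert_pendantPairs (v : V) :
    Set.InjOn (fun p : Σ _ : V, Finset V => insert p.1 p.2) (pendantPairs G v) := by
  rintro ⟨a, t⟩ hp ⟨a', t'⟩ hp' h
  obtain ⟨hva, hts, -⟩ := (mem_pendantPairs G).1 hp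
  obtain ⟨-, hts', -⟩ := (mem_pendantPairs G).1 hp'
  replace h : insert a t = insert a' t' := h
  have hat : a ∉ t := fun ha => notMem_commonNonNeighbors_of_adj G hva (hts ha)
  have hat' : a ∉ t' := fun ha => notMem_commonNonNeighbors_of_adj G hva (hts' ha)
  obtain rfl : a = a' := (mem_insert.1 (h ▸ mem_insert_self a t)).resolve_right hat'
  rw [← erase_insert hat, h, erase_insert hat']

theorem cnt3_eq_card_pendantPairs_filter (v : V) (Q : Finset V → Prop) [DecidablePred Q] :
    cnt3 v (fun a b c => G.Adj v a ∧ ¬G.Adj v b ∧ ¬G.Adj v c ∧ ¬G.Adj a b ∧ ¬G.Adj a c ∧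
      Q {b, c}) = #((pendantPairs G v).filter fun p => Q p.2) := by
  rw [cnt3, eq_comm]
  refine card_nbij (fun p => insert p.1 p.2) ?_
    ((injOn_insert_pendantPairs G v).mono (coe_subset.2 (filter_subset _ _))) ?_
  · rintro ⟨a, t⟩ hp
    simp only [mem_coe, mem_filter, mem_pendantPairs] at hp
    obtain ⟨⟨hva, hts, ht⟩, hQ⟩ := hp
    obtain ⟨b, c, hbc, rfl⟩ := card_eq_two.1 ht
    obtain ⟨⟨hvb, hab⟩, ⟨hvc, hac⟩⟩ : (¬G.Adj v b ∧ ¬G.Adj a b) ∧ (¬G.Adj v c ∧ ¬G.Adj a c) := by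
      simpa [insert_subset_iff, mem_commonNonNeighbors] using hts
    have hv : v ∉ ({a, b, c} : Finset V) := by
      simp only [mem_insert, mem_singleton, not_or]
      exact ⟨hva.ne, fun h => hab (h ▸ hva.symm), fun h => hac (h ▸ hva.symm)⟩
    have h3 : #({a, b, c} : Finset V) = 3 :=
      card_eq_three.2 ⟨a, b, c, fun h => hvb (h ▸ hva), fun h => hvc (h ▸ hva), hbc, rfl⟩
    simp only [mem_coe, mem_filter, mem_powersetCard]
    exact ⟨⟨subset_univ _, h3⟩, hv, a, by simp, b, by simp, c, by simp, rfl,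
      hva, hvb, hvc, hab, hac, hQ⟩
  · intro s hs
    simp only [mem_coe, mem_filter, mem_powersetCard] at hs
    obtain ⟨⟨-, h3⟩, -, a, -, b, -, c, -, rfl, hva, hvb, hvc, hab, hac, hQ⟩ := hs
    have hbc : b ≠ c := by
      rintro rfl
      rw [insert_eq_of_mem (mem_singleton_self b)] at h3
      exact absurd h3 (card_le_two.trans_lt (by norm_num)).ne
    refine ⟨⟨a, {b, c}⟩, ?_, rfl⟩
    simp only [mem_coe, mem_filter, mem_pendantPairs]
    refine ⟨⟨hva, ?_, card_pair hbc⟩, hQ⟩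
    simp [insert_subset_iff, mem_commonNonNeighbors, *]

theorem F1_eq_card_filter_isIndepSet (v : V) :
    F1 G v = #((pendantPairs G v).filter fun p => G.IsIndepSet (p.2 : Set V)) := by
  rw [F1, ← cnt3_eq_card_pendantPairs_filter G v fun t => G.IsIndepSet (t : Set V)]
  refine cnt3_congr fun a b c => ?_
  simp only [coe_pair, G.isIndepSet_pair_iff]

theorem F2_eq_card_filter_not_isIndepSet (v : V) :
    F2 G v = #((pendantPairs G v).filter fun p => ¬G.IsIndepSet (p.2 : Set V)) := by
  rw [F2, ← cnt3_eq_card_pendantPairs_filter G v fun t => ¬G.IsIndepSet (t : Set V)]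
  refine cnt3_congr fun a b c => ?_
  simp only [coe_pair, G.isIndepSet_pair_iff, not_not]
  tauto

theorem statement3 [DecidableRel G.Adj] (v : V) :
    ∑ a ∈ G.neighborFinset v, Nat.choose (n1e G v a) 2 = F1 G v + F2 G v := by
  rw [F1_eq_card_filter_isIndepSet, F2_eq_card_filter_not_isIndepSet,
    card_filter_add_card_filter_not, card_pendantPairs]

end FourProfiles
end

section
/- Let G be a finite simple graph with vertex set V. For every vertex v: the sum over all neighbors a of v of binomial(n2c(v,a), 2) equals 3·F6'(v) + F8'(v). -/
open Finset
open scoped Classical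

namespace FourProfiles

variable {V : Type*} [Fintype V] [DecidableEq V]

variable (G : SimpleGraph V)

/-!
The left side counts the pairs `(a, {b, c})` of distinct neighbours of `v` in which `a` is adjacent
to neither `b` nor `c`. Grouping them by the triple `S = {a, b, c} ⊆ Γ(v)`, each triple is counted
once for every vertex of `S` that is isolated in `G[S]`: three times if `S` is independent
(a claw centred at `v`), once if `S` spans exactly one edge (a paw whose degree-3 vertex is `v`),
and never otherwise.
-/

def HasLabeling {α : Type*} [DecidableEq α] (S : Finset α) (P : α → α → α → Prop) : Prop :=
  ∃ a ∈ S, ∃ b ∈ S, ∃ c ∈ S, S = {a, b, c} ∧ P a b c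

theorem hasLabeling_triple_iff {α : Type*} [DecidableEq α] {P : α → α → α → Prop} {a b c : α}
    (hab : a ≠ b) (hac : a ≠ c) (hbc : b ≠ c) :
    HasLabeling {a, b, c} P ↔ P a b c ∨ P a c b ∨ P b a c ∨ P b c a ∨ P c a b ∨ P c b a := by
  constructor
  · rintro ⟨x, hx, y, hy, z, hz, hS, hP⟩
    have h3 : #({x, y, z} : Finset α) = 3 := hS ▸ card_eq_three.2 ⟨a, b, c, hab, hac, hbc, rfl⟩
    have hxyz : x ≠ y ∧ x ≠ z ∧ y ≠ z := by
      refine ⟨?_, ?_, ?_⟩ <;> rintro rfl <;>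
        simp only [insert_eq_of_mem, mem_insert_self, mem_insert, mem_singleton, or_true] at h3 <;>
        exact absurd (h3.symm.trans_le card_le_two) (by norm_num)
    simp only [mem_insert, mem_singleton] at hx hy hz
    rcases hx with rfl | rfl | rfl <;> rcases hy with rfl | rfl | rfl <;>
      rcases hz with rfl | rfl | rfl <;> simp_all
  · rintro (h | h | h | h | h | h) <;>
      exact ⟨_, by simp, _, by simp, _, by simp,
        by ext; simp only [mem_insert, mem_singleton] <;> tauto, h⟩

theorem cnt3_eq_card_filter_powersetCard {v : V} {P : V → V → V → Prop} {N : Finset V}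
    (hv : v ∉ N) (hP : ∀ a b c, P a b c → a ∈ N ∧ b ∈ N ∧ c ∈ N) :
    cnt3 v P = #{S ∈ N.powersetCard 3 | HasLabeling S P} := by
  unfold cnt3
  congr 1
  ext S
  simp only [mem_filter, mem_powersetCard, subset_univ, true_and]
  constructor
  · rintro ⟨h3, -, hS⟩
    refine ⟨⟨?_, h3⟩, hS⟩
    obtain ⟨a, -, b, -, c, -, rfl, h⟩ := hS
    obtain ⟨ha, hb, hc⟩ := hP a b c h
    simp [insert_subset_iff, ha, hb, hc]
  · rintro ⟨⟨hN, h3⟩, hS⟩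
    exact ⟨h3, fun h => hv (hN h), hS⟩

def IsClawCenter (v a b c : V) : Prop :=
  G.Adj v a ∧ G.Adj v b ∧ G.Adj v c ∧ ¬G.Adj a b ∧ ¬G.Adj a c ∧ ¬G.Adj b c

def IsPawCenter (v a b c : V) : Prop :=
  G.Adj v a ∧ G.Adj v b ∧ G.Adj a b ∧ G.Adj v c ∧ ¬G.Adj a c ∧ ¬G.Adj b c

section Isolated

variable [DecidableRel G.Adj]

def isolatedIn (S : Finset V) : Finset V :=
  {a ∈ S | ∀ b ∈ S, ¬G.Adj a b}

theorem card_powersetCard_filter_mem_isolatedIn {N : Finset V} {a : V} (ha : a ∈ N) (k : ℕ) :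
    #{S ∈ N.powersetCard (k + 1) | a ∈ isolatedIn G S} =
      (#{x ∈ N | x ≠ a ∧ ¬G.Adj a x}).choose k := by
  rw [← card_powersetCard]
  symm
  apply card_nbij' (insert a) (fun S => S.erase a)
  · intro T hT
    rw [mem_coe, mem_powersetCard, subset_iff] at hT
    simp only [mem_filter] at hT
    have haT : a ∉ T := fun h => (hT.1 h).2.1 rfl
    simp only [mem_coe, isolatedIn, mem_filter, mem_powersetCard, insert_subset_iff,
      forall_mem_insert, mem_insert_self, true_and, card_insert_of_notMem haT, hT.2, G.irrefl,
      not_false_eq_true, and_true]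
    exact ⟨⟨ha, fun x hx => (hT.1 hx).1⟩, fun x hx => (hT.1 hx).2.2⟩
  · intro S hS
    rw [mem_coe, mem_filter, isolatedIn, mem_filter, mem_powersetCard] at hS
    obtain ⟨⟨hSN, hS3⟩, haS, hiso⟩ := hS
    rw [mem_coe, mem_powersetCard, card_erase_of_mem haS, hS3, add_tsub_cancel_right]
    refine ⟨fun x hx => ?_, rfl⟩
    obtain ⟨hxa, hxS⟩ := mem_erase.1 hx
    exact mem_filter.2 ⟨hSN hxS, hxa, hiso x hxS⟩
  · intro T hT
    exact erase_insert fun h => (mem_filter.1 ((mem_powersetCard.1 hT).1 h)).2.1 rfl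
  · intro S hS
    exact insert_erase (mem_filter.1 (mem_filter.1 hS).2).1

theorem sum_choose_card_nonadj_eq_sum_card_isolatedIn (N : Finset V) (k : ℕ) :
    ∑ a ∈ N, (#{x ∈ N | x ≠ a ∧ ¬G.Adj a x}).choose k =
      ∑ S ∈ N.powersetCard (k + 1), #(isolatedIn G S) := by
  calc ∑ a ∈ N, (#{x ∈ N | x ≠ a ∧ ¬G.Adj a x}).choose k
      = ∑ a ∈ N, #((N.powersetCard (k + 1)).bipartiteAbove (fun a S => a ∈ isolatedIn G S) a) :=
        sum_congr rfl fun a ha => (card_powersetCard_filter_mem_isolatedIn G ha k).symm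
    _ = ∑ S ∈ N.powersetCard (k + 1), #(N.bipartiteBelow (fun a S => a ∈ isolatedIn G S) S) :=
        sum_card_bipartiteAbove_eq_sum_card_bipartiteBelow _
    _ = ∑ S ∈ N.powersetCard (k + 1), #(isolatedIn G S) := by
        refine sum_congr rfl fun S hS => ?_
        rw [bipartiteBelow, filter_mem_eq_inter, inter_eq_right.2]
        exact (filter_subset _ _).trans (mem_powersetCard.1 hS).1

theorem card_isolatedIn_eq {v : V} {S : Finset V}
    (hS : S ∈ (G.neighborFinset v).powersetCard 3) :
    #(isolatedIn G S) = 3 * (if HasLabeling S (IsClawCenter G v) then 1 else 0) +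
      if HasLabeling S (IsPawCenter G v) then 1 else 0 := by
  obtain ⟨hSN, h3⟩ := mem_powersetCard.1 hS
  obtain ⟨a, b, c, hab, hac, hbc, rfl⟩ := card_eq_three.1 h3
  simp only [insert_subset_iff, singleton_subset_iff, SimpleGraph.mem_neighborFinset] at hSN
  obtain ⟨hva, hvb, hvc⟩ := hSN
  rw [hasLabeling_triple_iff hab hac hbc, hasLabeling_triple_iff hab hac hbc, isolatedIn,
    card_filter, sum_insert (by simp [hab, hac]), sum_insert (by simp [hbc]), sum_singleton]
  simp only [IsClawCenter, IsPawCenter, forall_mem_insert, mem_singleton, forall_eq, G.irrefl,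
    G.adj_comm b a, G.adj_comm c a, G.adj_comm c b, hva, hvb, hvc]
  by_cases h1 : G.Adj a b <;> by_cases h2 : G.Adj a c <;> by_cases h3 : G.Adj b c <;>
    simp [h1, h2, h3]

theorem n2c_eq_card_filter_neighborFinset (v a : V) :
    n2c G v a = #{x ∈ G.neighborFinset v | x ≠ a ∧ ¬G.Adj a x} := by
  unfold n2c
  congr 1
  ext x
  simp only [mem_filter, mem_univ, true_and, SimpleGraph.mem_neighborFinset]
  tauto

end Isolated

theorem statement4 [DecidableRel G.Adj] (v : V) :
    ∑ a ∈ G.neighborFinset v, Nat.choose (n2c G v a) 2 = 3 * F6' G v + F8' G v := by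
  set N := G.neighborFinset v
  have hv : v ∉ N := G.notMem_neighborFinset_self v
  have hN : ∀ {a}, G.Adj v a → a ∈ N := (G.mem_neighborFinset v _).2
  calc ∑ a ∈ N, (n2c G v a).choose 2
      = ∑ a ∈ N, (#{x ∈ N | x ≠ a ∧ ¬G.Adj a x}).choose 2 :=
        sum_congr rfl fun a _ => by rw [n2c_eq_card_filter_neighborFinset]
    _ = ∑ S ∈ N.powersetCard 3, #(isolatedIn G S) :=
        sum_choose_card_nonadj_eq_sum_card_isolatedIn G N 2
    _ = ∑ S ∈ N.powersetCard 3, (3 * (if HasLabeling S (IsClawCenter G v) then 1 else 0) +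
          if HasLabeling S (IsPawCenter G v) then 1 else 0) :=
        sum_congr rfl fun S hS => card_isolatedIn_eq G hS
    _ = 3 * #{S ∈ N.powersetCard 3 | HasLabeling S (IsClawCenter G v)} +
          #{S ∈ N.powersetCard 3 | HasLabeling S (IsPawCenter G v)} := by
        rw [sum_add_distrib, ← mul_sum, card_filter, card_filter]
    _ = 3 * cnt3 v (IsClawCenter G v) + cnt3 v (IsPawCenter G v) := by
        rw [cnt3_eq_card_filter_powersetCard hv fun a b c h => ⟨hN h.1, hN h.2.1, hN h.2.2.1⟩,
          cnt3_eq_card_filter_powersetCard hv fun a b c h => ⟨hN h.1, hN h.2.1, hN h.2.2.2.1⟩]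
    _ = 3 * F6' G v + F8' G v := rfl

end FourProfiles
end

section
/- Let G be a finite simple graph with vertex set V. For every vertex v: the sum over all neighbors a of v of binomial(n3(v,a), 2) equals F9'(v) + 3·F10(v). -/
/-!
For `a ∈ Γ(v)`, `binomial(n3(v,a), 2)` counts the pairs `{b, c} ⊆ Γ(v)` with `a` adjacent to
both, so the left-hand side counts pairs `(a, t)` where `t ⊆ Γ(v)` is a 3-set and `a ∈ t` is
adjacent to the other two vertices of `t`. A 3-set spanning a triangle has three such vertices,
one spanning a two-edge path has exactly one, and any other has none; together with `v` these
3-sets are exactly the `K4`s and the diamonds in which `v` has degree 3.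
-/

open Finset
open scoped Classical

namespace FourProfiles

variable {V : Type*} [Fintype V] [DecidableEq V]

variable (G : SimpleGraph V)

theorem _root_.Finset.sum_card_filter_powersetCard_erase {α : Type*} [DecidableEq α]
    (S : Finset α) (k : ℕ) (Q : α → Finset α → Prop) [∀ a, DecidablePred (Q a)] :
    ∑ a ∈ S, (((S.erase a).powersetCard k).filter (Q a)).card =
      ∑ t ∈ S.powersetCard (k + 1), (t.filter fun a => Q a (t.erase a)).card := by
  rw [← card_sigma, ← card_sigma]
  refine card_bij' (fun p _ => ⟨insert p.1 p.2, p.1⟩) (fun p _ => ⟨p.2, p.1.erase p.2⟩)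
    ?_ ?_ ?_ ?_
  · rintro ⟨a, s⟩ hp
    simp only [mem_sigma, mem_filter, mem_powersetCard, subset_erase] at hp ⊢
    obtain ⟨ha, ⟨⟨hsS, has⟩, hs⟩, hQ⟩ := hp
    refine ⟨⟨insert_subset ha hsS, by rw [card_insert_of_notMem has, hs]⟩,
      mem_insert_self a s, ?_⟩
    rwa [erase_insert has]
  · rintro ⟨t, a⟩ hp
    simp only [mem_sigma, mem_filter, mem_powersetCard] at hp ⊢
    obtain ⟨⟨htS, ht⟩, hat, hQ⟩ := hp
    exact ⟨htS hat, ⟨erase_subset_erase a htS, by rw [card_erase_of_mem hat, ht]; rfl⟩, hQ⟩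
  · rintro ⟨a, s⟩ hp
    simp only [mem_sigma, mem_filter, mem_powersetCard, subset_erase] at hp
    simp [erase_insert hp.2.1.1.2]
  · rintro ⟨t, a⟩ hp
    simp only [mem_sigma, mem_filter] at hp
    simp [insert_erase hp.2.1]

section

variable [DecidableRel G.Adj]

def universalVertices (t : Finset V) : Finset V :=
  t.filter fun a => t.erase a ⊆ G.neighborFinset a

variable {G}

theorem mem_universalVertices {t : Finset V} {a : V} :
    a ∈ universalVertices G t ↔ a ∈ t ∧ ∀ b ∈ t, b ≠ a → G.Adj a b := by
  simp only [universalVertices, mem_filter, subset_iff, mem_erase, SimpleGraph.mem_neighborFinset]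
  exact and_congr_right fun _ =>
    ⟨fun h b hb hba => h ⟨hba, hb⟩, fun h b hb => h b hb.2 hb.1⟩

theorem isClique_of_mem_universalVertices {t : Finset V} (ht : t.card = 3) {a b : V}
    (ha : a ∈ universalVertices G t) (hb : b ∈ universalVertices G t) (hab : a ≠ b) :
    G.IsClique (t : Set V) := by
  rw [mem_universalVertices] at ha hb
  have hrest : ((t.erase a).erase b).card ≤ 1 := by
    rw [card_erase_of_mem (mem_erase.2 ⟨hab.symm, hb.1⟩),
      card_erase_of_mem ha.1, ht]
  intro x hx y hy hxy
  by_cases hxab : x = a ∨ x = b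
  · rcases hxab with rfl | rfl
    exacts [ha.2 y hy (Ne.symm hxy), hb.2 y hy (Ne.symm hxy)]
  by_cases hyab : y = a ∨ y = b
  · rcases hyab with rfl | rfl
    exacts [(ha.2 x hx hxy).symm, (hb.2 x hx hxy).symm]
  push Not at hxab hyab
  -- `x` and `y` would both lie in the singleton `(t.erase a).erase b`
  exact absurd (card_le_one.1 hrest x (by simp [mem_coe.1 hx, hxab.1, hxab.2])
    y (by simp [mem_coe.1 hy, hyab.1, hyab.2])) hxy

theorem card_universalVertices {t : Finset V} (ht : t.card = 3) :
    (universalVertices G t).card =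
      if G.IsClique (t : Set V) then 3 else if (universalVertices G t).Nonempty then 1 else 0 := by
  split_ifs with hcl hne
  · rw [← ht]
    congr 1
    refine filter_true_of_mem fun a ha b hb => ?_
    rw [mem_erase] at hb
    exact (G.mem_neighborFinset a b).2 (hcl ha hb.2 hb.1.symm)
  · refine le_antisymm (card_le_one.2 fun a ha b hb => ?_) (card_pos.2 hne)
    by_contra hab
    exact hcl (isClique_of_mem_universalVertices ht ha hb hab)
  · simpa [not_nonempty_iff_eq_empty] using hne

theorem choose_n3_eq_card_filter_powersetCard (v a : V) :
    (n3 G v a).choose 2 = ((((G.neighborFinset v).erase a).powersetCard 2).filter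
      (· ⊆ G.neighborFinset a)).card := by
  have hn3 : n3 G v a = (G.neighborFinset v ∩ G.neighborFinset a).card := by
    unfold n3
    congr 1
    ext x
    simp
  rw [hn3, ← card_powersetCard]
  congr 1
  ext s
  simp only [mem_powersetCard, mem_filter, subset_inter_iff,
    subset_erase]
  constructor
  · rintro ⟨⟨hv, ha⟩, hs⟩
    exact ⟨⟨⟨hv, fun has => G.irrefl ((G.mem_neighborFinset a a).1 (ha has))⟩, hs⟩, ha⟩
  · rintro ⟨⟨⟨hv, -⟩, hs⟩, ha⟩
    exact ⟨⟨hv, ha⟩, hs⟩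

theorem cnt3_eq_card_filter_powersetCard_neighborFinset (v : V) (R : V → V → V → Prop) :
    cnt3 v (fun a b c => G.Adj v a ∧ G.Adj v b ∧ G.Adj v c ∧ R a b c) =
      (((G.neighborFinset v).powersetCard 3).filter
        (fun s => ∃ a ∈ s, ∃ b ∈ s, ∃ c ∈ s, s = {a, b, c} ∧ R a b c)).card := by
  unfold cnt3
  congr 1
  ext s
  simp only [mem_filter, mem_powersetCard, subset_univ, true_and]
  constructor
  · rintro ⟨hs, -, a, ha, b, hb, c, hc, rfl, hva, hvb, hvc, hR⟩
    refine ⟨⟨?_, hs⟩, a, ha, b, hb, c, hc, rfl, hR⟩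
    intro x hx
    simp only [mem_insert, mem_singleton] at hx
    rcases hx with rfl | rfl | rfl <;> simpa
  · rintro ⟨⟨hsub, hs⟩, a, ha, b, hb, c, hc, hsabc, hR⟩
    have hN : ∀ x ∈ s, G.Adj v x := fun x hx => (G.mem_neighborFinset v x).1 (hsub hx)
    exact ⟨hs, fun hv => G.irrefl (hN v hv), a, ha, b, hb, c, hc, hsabc, hN a ha, hN b hb,
      hN c hc, hR⟩

theorem F10_eq_card_filter_isClique (v : V) :
    F10 G v = (((G.neighborFinset v).powersetCard 3).filter
      (fun t : Finset V => G.IsClique (t : Set V))).card := by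
  rw [F10, cnt3_eq_card_filter_powersetCard_neighborFinset v
    fun a b c => G.Adj a b ∧ G.Adj a c ∧ G.Adj b c]
  congr 1
  ext t
  simp only [mem_filter]
  refine and_congr_right fun ht => ?_
  constructor
  · rintro ⟨a, -, b, -, c, -, rfl, hab, hac, hbc⟩
    exact (SimpleGraph.is3Clique_triple_iff.2 ⟨hab, hac, hbc⟩).isClique
  · intro hcl
    obtain ⟨a, b, c, hab, hac, hbc, rfl⟩ :=
      SimpleGraph.is3Clique_iff.1 ⟨hcl, (mem_powersetCard.1 ht).2⟩
    exact ⟨a, by simp, b, by simp, c, by simp, rfl, hab, hac, hbc⟩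

theorem F9'_eq_card_filter_universalVertices (v : V) :
    F9' G v = (((G.neighborFinset v).powersetCard 3).filter
      fun t : Finset V => (universalVertices G t).Nonempty ∧ ¬G.IsClique (t : Set V)).card := by
  rw [F9', cnt3_eq_card_filter_powersetCard_neighborFinset v
    fun a b c => G.Adj a b ∧ G.Adj a c ∧ ¬G.Adj b c]
  congr 1
  ext t
  simp only [mem_filter]
  refine and_congr_right fun ht => ?_
  have ht3 := (mem_powersetCard.1 ht).2
  constructor
  · rintro ⟨a, -, b, -, c, -, rfl, hab, hac, hbc⟩
    have hbc' : b ≠ c := by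
      rintro rfl
      have := card_le_two (a := a) (b := b)
      simp_all
    refine ⟨⟨a, mem_universalVertices.2 ⟨by simp, fun x hx hxa => ?_⟩⟩,
      fun hcl => hbc (hcl (by simp) (by simp) hbc')⟩
    simp only [mem_insert, mem_singleton] at hx
    rcases hx with rfl | rfl | rfl
    exacts [absurd rfl hxa, hab, hac]
  · rintro ⟨⟨a, ha⟩, hncl⟩
    rw [mem_universalVertices] at ha
    obtain ⟨b, c, -, hbc⟩ := card_eq_two.1
      (show (t.erase a).card = 2 by rw [card_erase_of_mem ha.1, ht3])
    have hb : b ∈ t.erase a := by simp [hbc]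
    have hc : c ∈ t.erase a := by simp [hbc]
    have hab := ha.2 b (mem_of_mem_erase hb) (ne_of_mem_erase hb)
    have hac := ha.2 c (mem_of_mem_erase hc) (ne_of_mem_erase hc)
    have htabc : t = {a, b, c} := by rw [← hbc, insert_erase ha.1]
    subst htabc
    exact ⟨a, by simp, b, by simp, c, by simp, rfl, hab, hac,
      fun hbc' => hncl (SimpleGraph.is3Clique_triple_iff.2 ⟨hab, hac, hbc'⟩).isClique⟩

end

theorem statement5 [DecidableRel G.Adj] (v : V) :
    ∑ a ∈ G.neighborFinset v, Nat.choose (n3 G v a) 2 = F9' G v + 3 * F10 G v := by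
  calc ∑ a ∈ G.neighborFinset v, Nat.choose (n3 G v a) 2
      = ∑ t ∈ (G.neighborFinset v).powersetCard 3, (universalVertices G t).card := by
        simp_rw [choose_n3_eq_card_filter_powersetCard]
        exact Finset.sum_card_filter_powersetCard_erase _ 2 fun a s => s ⊆ G.neighborFinset a
    _ = ∑ t ∈ (G.neighborFinset v).powersetCard 3,
          ((if (universalVertices G t).Nonempty ∧ ¬G.IsClique (t : Set V) then 1 else 0) +
            3 * if G.IsClique (t : Set V) then 1 else 0) := by
        refine sum_congr rfl fun t ht => ?_
        rw [card_universalVertices (mem_powersetCard.1 ht).2]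
        split_ifs <;> simp_all
    _ = F9' G v + 3 * F10 G v := by
        rw [sum_add_distrib, ← mul_sum, sum_boole, sum_boole,
          F9'_eq_card_filter_universalVertices, F10_eq_card_filter_isClique]
        simp only [Nat.cast_id]

end FourProfiles
end

section
/- Let G be a finite simple graph with vertex set V. For every vertex v: the sum over all neighbors a of v of n1e(v,a) · n2c(v,a) equals 2·F3'(v) + F4'(v). -/
open Finset
open scoped Classical

namespace FourProfiles

variable {V : Type*} [Fintype V] [DecidableEq V]

variable (G : SimpleGraph V)

lemma card3_ne {a b c : V} (h : ({a, b, c} : Finset V).card = 3) :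
    a ≠ b ∧ a ≠ c ∧ b ≠ c := by
  refine ⟨?_, ?_, ?_⟩ <;> rintro rfl
  · have he : ({a, a, c} : Finset V) = {a, c} := by ext x; simp
    rw [he] at h
    have := Finset.card_insert_le a ({c} : Finset V)
    simp at this; omega
  · have he : ({a, b, a} : Finset V) = {a, b} := by ext x; simp; tauto
    rw [he] at h
    have := Finset.card_insert_le a ({b} : Finset V)
    simp at this; omega
  · have he : ({a, b, b} : Finset V) = {a, b} := by ext x; simp
    rw [he] at h
    have := Finset.card_insert_le a ({b} : Finset V)
    simp at this; omega

lemma two_mul_of_fiber {α β : Type*} [DecidableEq β] (S : Finset α) (T : Finset β)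
    (f : α → β) (hmem : ∀ p ∈ S, f p ∈ T)
    (hfib : ∀ t ∈ T, (S.filter (fun p => f p = t)).card = 2) :
    S.card = 2 * T.card := by
  rw [Finset.card_eq_sum_card_fiberwise hmem, Finset.sum_congr rfl hfib,
    Finset.sum_const, smul_eq_mul, mul_comm]

lemma pair_card {α : Type*} [DecidableEq α] {x y : α} (h : x ≠ y) :
    ({x, y} : Finset α).card = 2 := by
  rw [Finset.card_insert_of_notMem (by simp [h]), Finset.card_singleton]

set_option maxHeartbeats 2000000 in
theorem statement6 [DecidableRel G.Adj] (v : V) :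
    ∑ a ∈ G.neighborFinset v, n1e G v a * n2c G v a = 2 * F3' G v + F4' G v := by
  classical
  set S : Finset (V × V × V) := univ.filter (fun p =>
    G.Adj v p.1 ∧ G.Adj v p.2.1 ∧ ¬G.Adj p.1 p.2.1 ∧ p.2.1 ≠ p.1 ∧
      ¬G.Adj v p.2.2 ∧ ¬G.Adj p.1 p.2.2) with hS
  -- LHS counts ordered triples
  have hLHS : ∑ a ∈ G.neighborFinset v, n1e G v a * n2c G v a = S.card := by
    rw [hS, card_filter, Fintype.sum_prod_type]
    have hnb : G.neighborFinset v = univ.filter (fun a => G.Adj v a) := by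
      ext a; simp
    rw [hnb, sum_filter]
    refine Finset.sum_congr rfl (fun a _ => ?_)
    rw [Fintype.sum_prod_type]
    by_cases hva : G.Adj v a
    · rw [if_pos hva]
      rw [n1e, n2c, card_filter, card_filter, Finset.sum_mul_sum, Finset.sum_comm]
      refine Finset.sum_congr rfl (fun b _ => Finset.sum_congr rfl (fun c _ => ?_))
      split_ifs <;> simp_all
    · rw [if_neg hva]
      symm
      refine Finset.sum_eq_zero (fun b _ => Finset.sum_eq_zero (fun c _ => ?_))
      rw [if_neg]; tauto
  -- split according to adjacency of b and c
  have hsplit : (S.filter fun p => G.Adj p.2.1 p.2.2).card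
      + (S.filter fun p => ¬G.Adj p.2.1 p.2.2).card = S.card :=
    Finset.card_filter_add_card_filter_not _
  -- the ¬adjacent part counts 2 * F3'
  have h1 : (S.filter fun p => ¬G.Adj p.2.1 p.2.2).card = 2 * F3' G v := by
    rw [F3', cnt3]
    apply two_mul_of_fiber _ _ (fun p => ({p.1, p.2.1, p.2.2} : Finset V))
    · rintro ⟨a, b, c⟩ hp
      simp only [hS, Finset.mem_filter, Finset.mem_univ, true_and] at hp
      obtain ⟨⟨hva, hvb, hab, hba, hvc, hac⟩, hbc⟩ := hp
      have hav : v ≠ a := G.ne_of_adj hva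
      have hbv : v ≠ b := G.ne_of_adj hvb
      have hcv : c ≠ v := fun h => hac (h ▸ hva.symm)
      have h1 : a ≠ b := fun h => hba h.symm
      have h2 : a ≠ c := fun h => hvc (h ▸ hva)
      have h3 : b ≠ c := fun h => hvc (h ▸ hvb)
      simp only [Finset.mem_filter, Finset.mem_powersetCard_univ]
      refine ⟨Finset.card_eq_three.mpr ⟨a, b, c, h1, h2, h3, rfl⟩, ?_, ?_⟩
      · simp only [Finset.mem_insert, Finset.mem_singleton]
        push_neg
        exact ⟨hav, hbv, fun h => hcv h.symm⟩
      · exact ⟨a, by simp, b, by simp, c, by simp, rfl,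
          hva, hvb, hab, hvc, hac, hbc⟩
    · intro t ht
      simp only [Finset.mem_filter, Finset.mem_powersetCard_univ] at ht
      obtain ⟨hcard, hvt, a, _, b, _, c, _, rfl, hva, hvb, hab, hvc, hac, hbc⟩ := ht
      obtain ⟨h1, h2, h3⟩ := card3_ne hcard
      have hset : ((S.filter fun p => ¬G.Adj p.2.1 p.2.2).filter
          (fun p => ({p.1, p.2.1, p.2.2} : Finset V) = ({a, b, c} : Finset V)))
          = {(a, b, c), (b, a, c)} := by
        ext ⟨x, y, z⟩
        simp only [Finset.mem_filter, Finset.mem_insert, Finset.mem_singleton,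
          hS, Finset.mem_univ, true_and, Prod.mk.injEq]
        constructor
        · rintro ⟨⟨⟨hvx, hvy, hxy, hyx, hvz, hxz⟩, hyz⟩, hst⟩
          have hx : x = a ∨ x = b ∨ x = c := by
            have : x ∈ ({a, b, c} : Finset V) := hst ▸ (by simp)
            simpa using this
          have hy : y = a ∨ y = b ∨ y = c := by
            have : y ∈ ({a, b, c} : Finset V) := hst ▸ (by simp)
            simpa using this
          have hz : z = a ∨ z = b ∨ z = c := by
            have : z ∈ ({a, b, c} : Finset V) := hst ▸ (by simp)
            simpa using this
          have hzc : z = c := by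
            rcases hz with rfl | rfl | rfl
            · exact absurd hva hvz
            · exact absurd hvb hvz
            · rfl
          subst hzc
          rcases hx with rfl | rfl | rfl
          · left
            refine ⟨rfl, ?_, rfl⟩
            rcases hy with rfl | rfl | rfl
            · exact absurd rfl hyx
            · rfl
            · exact absurd hvy hvc
          · right
            refine ⟨rfl, ?_, rfl⟩
            rcases hy with rfl | rfl | rfl
            · rfl
            · exact absurd rfl hyx
            · exact absurd hvy hvc
          · exact absurd hvx hvc
        · rintro (⟨rfl, rfl, rfl⟩ | ⟨rfl, rfl, rfl⟩)
          · exact ⟨⟨⟨hva, hvb, hab, fun h => h1 h.symm, hvc, hac⟩, hbc⟩, rfl⟩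
          · refine ⟨⟨⟨hvb, hva, fun h => hab h.symm, h1, hvc, hbc⟩, hac⟩, ?_⟩
            ext w; simp; tauto
      rw [hset, pair_card]
      intro h
      exact h1 (congrArg Prod.fst h)
  -- the adjacent part counts F4'
  have h2 : (S.filter fun p => G.Adj p.2.1 p.2.2).card = F4' G v := by
    rw [F4', cnt3, Finset.filter_congr_decidable]
    apply Finset.card_bij (fun p _ => ({p.1, p.2.1, p.2.2} : Finset V))
    · rintro ⟨a, b, c⟩ hp
      simp only [hS, Finset.mem_filter, Finset.mem_univ, true_and] at hp
      obtain ⟨⟨hva, hvb, hab, hba, hvc, hac⟩, hbc⟩ := hp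
      have hav : v ≠ a := G.ne_of_adj hva
      have hbv : v ≠ b := G.ne_of_adj hvb
      have hcv : c ≠ v := fun h => hac (h ▸ hva.symm)
      have h1 : a ≠ b := fun h => hba h.symm
      have h2 : a ≠ c := fun h => hvc (h ▸ hva)
      have h3 : b ≠ c := fun h => hvc (h ▸ hvb)
      simp only [Finset.mem_filter, Finset.mem_powersetCard_univ]
      refine ⟨Finset.card_eq_three.mpr ⟨a, b, c, h1, h2, h3, rfl⟩, ?_, ?_⟩
      · simp only [Finset.mem_insert, Finset.mem_singleton]
        push_neg
        exact ⟨hav, hbv, fun h => hcv h.symm⟩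
      · exact ⟨a, by simp, b, by simp, c, by simp, rfl,
          hva, hvb, hbc, hab, hvc, hac⟩
    · rintro ⟨a, b, c⟩ hp ⟨x, y, z⟩ hq heq
      simp only [hS, Finset.mem_filter, Finset.mem_univ, true_and] at hp hq
      obtain ⟨⟨hva, hvb, hab, hba, hvc, hac⟩, hbc⟩ := hp
      obtain ⟨⟨hvx, hvy, hxy, hyx, hvz, hxz⟩, hyz⟩ := hq
      have hx : x = a ∨ x = b ∨ x = c := by
        have : x ∈ ({a, b, c} : Finset V) := heq ▸ (by simp)
        simpa using this
      have hy : y = a ∨ y = b ∨ y = c := by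
        have : y ∈ ({a, b, c} : Finset V) := heq ▸ (by simp)
        simpa using this
      have hz : z = a ∨ z = b ∨ z = c := by
        have : z ∈ ({a, b, c} : Finset V) := heq ▸ (by simp)
        simpa using this
      have hzc : z = c := by
        rcases hz with rfl | rfl | rfl
        · exact absurd hva hvz
        · exact absurd hvb hvz
        · rfl
      subst hzc
      have hxa : x = a := by
        rcases hx with rfl | rfl | rfl
        · rfl
        · exact absurd hbc hxz
        · exact absurd hvx hvc
      subst hxa
      have hyb : y = b := by
        rcases hy with rfl | rfl | rfl
        · exact absurd rfl hyx
        · rfl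
        · exact absurd hvy hvc
      subst hyb
      rfl
    · intro s hs
      simp only [Finset.mem_filter, Finset.mem_powersetCard_univ] at hs
      obtain ⟨hcard, hvs, a, _, b, _, c, _, rfl, hva, hvb, hbc, hab, hvc, hac⟩ := hs
      refine ⟨(a, b, c), ?_, rfl⟩
      simp only [hS, Finset.mem_filter, Finset.mem_univ, true_and]
      exact ⟨⟨hva, hvb, hab, fun h => hac (h ▸ hbc), hvc, hac⟩, hbc⟩
  rw [hLHS, ← hsplit, h1, h2, add_comm]

end FourProfiles
end

section
/- Let G be a finite simple graph with vertex set V. For every vertex v: the sum over all neighbors a of v of n1e(v,a) · n3(v,a) equals 2·F5(v) + F8''(v). -/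
open Finset
open scoped Classical

namespace FourProfiles

variable {V : Type*} [Fintype V] [DecidableEq V]

variable (G : SimpleGraph V)

private lemma ite_mul_ite_eq (p q : Prop) [Decidable p] [Decidable q] :
    (if p then (1:ℕ) else 0) * (if q then (1:ℕ) else 0) = if p ∧ q then 1 else 0 := by
  split_ifs <;> simp_all

private lemma cnt3_eq_card (v : V) (P : V → V → V → Prop)
    [DecidablePred fun s : Finset V =>
      v ∉ s ∧ ∃ a ∈ s, ∃ b ∈ s, ∃ c ∈ s, s = {a, b, c} ∧ P a b c] :
    cnt3 v P = (((Finset.univ : Finset V).powersetCard 3).filter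
      (fun s => v ∉ s ∧ ∃ a ∈ s, ∃ b ∈ s, ∃ c ∈ s, s = {a, b, c} ∧ P a b c)).card := by
  rw [cnt3]
  congr 1
  exact Finset.filter_congr_decidable _ _ _

set_option maxHeartbeats 1000000 in
private lemma statement7_fiber5 [DecidableRel G.Adj] (v : V) :
    ((univ : Finset (V × V × V)).filter fun t =>
      (G.Adj v t.1 ∧ G.Adj v t.2.1 ∧ G.Adj t.1 t.2.1 ∧ ¬G.Adj v t.2.2 ∧ ¬G.Adj t.1 t.2.2)
        ∧ ¬G.Adj t.2.1 t.2.2).card = 2 * F5 G v := by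
  classical
  rw [F5, cnt3_eq_card]
  have hmem : ∀ t ∈ ((univ : Finset (V × V × V)).filter fun t =>
      (G.Adj v t.1 ∧ G.Adj v t.2.1 ∧ G.Adj t.1 t.2.1 ∧ ¬G.Adj v t.2.2 ∧ ¬G.Adj t.1 t.2.2)
        ∧ ¬G.Adj t.2.1 t.2.2),
      ({t.1, t.2.1, t.2.2} : Finset V) ∈
      (((Finset.univ : Finset V).powersetCard 3).filter
        (fun s => v ∉ s ∧ ∃ a ∈ s, ∃ b ∈ s, ∃ c ∈ s, s = {a, b, c} ∧
          (G.Adj v a ∧ G.Adj v b ∧ G.Adj a b ∧ ¬G.Adj v c ∧ ¬G.Adj a c ∧ ¬G.Adj b c))) := by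
    rintro ⟨a, b, c⟩ ht
    simp only [Finset.mem_filter, Finset.mem_univ, true_and] at ht
    obtain ⟨⟨hva, hvb, hab, hvc, hac⟩, hbc⟩ := ht
    have hab' : a ≠ b := G.ne_of_adj hab
    have hac' : a ≠ c := fun h => hvc (h ▸ hva)
    have hbc' : b ≠ c := fun h => hvc (h ▸ hvb)
    have hva' : v ≠ a := G.ne_of_adj hva
    have hvb' : v ≠ b := G.ne_of_adj hvb
    have hvc' : v ≠ c := fun h => hac (h ▸ hva.symm)
    refine Finset.mem_filter.mpr ⟨Finset.mem_powersetCard.mpr ⟨subset_univ _, ?_⟩, ?_, ?_⟩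
    · exact Finset.card_eq_three.mpr ⟨a, b, c, hab', hac', hbc', rfl⟩
    · simp only [Finset.mem_insert, Finset.mem_singleton]
      push_neg
      exact ⟨hva', hvb', hvc'⟩
    · exact ⟨a, by simp, b, by simp, c, by simp, rfl, hva, hvb, hab, hvc, hac, hbc⟩
  rw [Finset.card_eq_sum_card_fiberwise hmem, mul_comm]
  refine Finset.sum_const_nat fun s hs => ?_
  simp only [Finset.mem_filter] at hs
  obtain ⟨hpow, hv, a, ha, b, hb, c, hc, hseq, hva, hvb, hab, hvc, hac, hbc⟩ := hs
  have hab' : a ≠ b := G.ne_of_adj hab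
  have hpair : #(({(a, b, c), (b, a, c)}) : Finset (V × V × V)) = 2 := by
    rw [Finset.card_insert_of_notMem (by simp [hab']), Finset.card_singleton]
  rw [← hpair]
  congr 1
  ext ⟨x, y, z⟩
  simp only [Finset.mem_filter, Finset.mem_univ, true_and, Finset.mem_insert,
    Finset.mem_singleton, Prod.mk.injEq]
  constructor
  · rintro ⟨⟨⟨hvx, hvy, hxy, hvz, hxz⟩, hyz⟩, hset⟩
    have hx : x = a ∨ x = b ∨ x = c := by
      have : x ∈ ({a, b, c} : Finset V) := by rw [← hseq, ← hset]; simp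
      simpa using this
    have hy : y = a ∨ y = b ∨ y = c := by
      have : y ∈ ({a, b, c} : Finset V) := by rw [← hseq, ← hset]; simp
      simpa using this
    have hz : z = a ∨ z = b ∨ z = c := by
      have : z ∈ ({a, b, c} : Finset V) := by rw [← hseq, ← hset]; simp
      simpa using this
    have hzc : z = c := by
      rcases hz with rfl | rfl | rfl
      · exact absurd hva hvz
      · exact absurd hvb hvz
      · rfl
    subst hzc
    rcases hx with rfl | rfl | rfl
    · rcases hy with rfl | rfl | rfl
      · exact absurd hxy (G.irrefl)
      · exact Or.inl ⟨rfl, rfl, rfl⟩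
      · exact absurd hvy hvc
    · rcases hy with rfl | rfl | rfl
      · exact Or.inr ⟨rfl, rfl, rfl⟩
      · exact absurd hxy (G.irrefl)
      · exact absurd hvy hvc
    · exact absurd hvx hvc
  · rintro (⟨rfl, rfl, rfl⟩ | ⟨rfl, rfl, rfl⟩)
    · exact ⟨⟨⟨hva, hvb, hab, hvc, hac⟩, hbc⟩, hseq.symm⟩
    · refine ⟨⟨⟨hvb, hva, hab.symm, hvc, hbc⟩, hac⟩, ?_⟩
      rw [hseq]; exact Finset.insert_comm _ _ _

set_option maxHeartbeats 1000000 in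
private lemma statement7_fiber8 [DecidableRel G.Adj] (v : V) :
    ((univ : Finset (V × V × V)).filter fun t =>
      (G.Adj v t.1 ∧ G.Adj v t.2.1 ∧ G.Adj t.1 t.2.1 ∧ ¬G.Adj v t.2.2 ∧ ¬G.Adj t.1 t.2.2)
        ∧ G.Adj t.2.1 t.2.2).card = F8'' G v := by
  classical
  rw [F8'', cnt3_eq_card]
  have hmem : ∀ t ∈ ((univ : Finset (V × V × V)).filter fun t =>
      (G.Adj v t.1 ∧ G.Adj v t.2.1 ∧ G.Adj t.1 t.2.1 ∧ ¬G.Adj v t.2.2 ∧ ¬G.Adj t.1 t.2.2)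
        ∧ G.Adj t.2.1 t.2.2),
      ({t.1, t.2.1, t.2.2} : Finset V) ∈
      (((Finset.univ : Finset V).powersetCard 3).filter
        (fun s => v ∉ s ∧ ∃ a ∈ s, ∃ b ∈ s, ∃ c ∈ s, s = {a, b, c} ∧
          (G.Adj v a ∧ G.Adj v b ∧ G.Adj a b ∧ G.Adj a c ∧ ¬G.Adj v c ∧ ¬G.Adj b c))) := by
    rintro ⟨a, b, c⟩ ht
    simp only [Finset.mem_filter, Finset.mem_univ, true_and] at ht
    obtain ⟨⟨hva, hvb, hab, hvc, hac⟩, hbc⟩ := ht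
    have hab' : a ≠ b := G.ne_of_adj hab
    have hac' : a ≠ c := fun h => hvc (h ▸ hva)
    have hbc' : b ≠ c := G.ne_of_adj hbc
    have hva' : v ≠ a := G.ne_of_adj hva
    have hvb' : v ≠ b := G.ne_of_adj hvb
    have hvc' : v ≠ c := fun h => hac (h ▸ hva.symm)
    refine Finset.mem_filter.mpr ⟨Finset.mem_powersetCard.mpr ⟨subset_univ _, ?_⟩, ?_, ?_⟩
    · exact Finset.card_eq_three.mpr ⟨a, b, c, hab', hac', hbc', rfl⟩
    · simp only [Finset.mem_insert, Finset.mem_singleton]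
      push_neg
      exact ⟨hva', hvb', hvc'⟩
    · refine ⟨b, by simp, a, by simp, c, by simp, Finset.insert_comm _ _ _,
        hvb, hva, hab.symm, hbc, hvc, hac⟩
  rw [Finset.card_eq_sum_card_fiberwise hmem]
  conv_rhs => rw [Finset.card_eq_sum_ones]
  refine Finset.sum_congr rfl fun s hs => ?_
  simp only [Finset.mem_filter] at hs
  obtain ⟨hpow, hv, a, ha, b, hb, c, hc, hseq, hva, hvb, hab, hac, hvc, hbc⟩ := hs
  have hab' : a ≠ b := G.ne_of_adj hab
  have hpair : #(({(b, a, c)}) : Finset (V × V × V)) = 1 := by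
    exact Finset.card_singleton _
  rw [← hpair]
  congr 1
  ext ⟨x, y, z⟩
  simp only [Finset.mem_filter, Finset.mem_univ, true_and, Finset.mem_insert,
    Finset.mem_singleton, Prod.mk.injEq]
  constructor
  · rintro ⟨⟨⟨hvx, hvy, hxy, hvz, hxz⟩, hyz⟩, hset⟩
    have hx : x = a ∨ x = b ∨ x = c := by
      have : x ∈ ({a, b, c} : Finset V) := by rw [← hseq, ← hset]; simp
      simpa using this
    have hy : y = a ∨ y = b ∨ y = c := by
      have : y ∈ ({a, b, c} : Finset V) := by rw [← hseq, ← hset]; simp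
      simpa using this
    have hz : z = a ∨ z = b ∨ z = c := by
      have : z ∈ ({a, b, c} : Finset V) := by rw [← hseq, ← hset]; simp
      simpa using this
    have hzc : z = c := by
      rcases hz with rfl | rfl | rfl
      · exact absurd hva hvz
      · exact absurd hvb hvz
      · rfl
    subst hzc
    have hxb : x = b := by
      rcases hx with rfl | rfl | rfl
      · exact absurd hac hxz
      · rfl
      · exact absurd hvx hvc
    subst hxb
    have hya : y = a := by
      rcases hy with rfl | rfl | rfl
      · rfl
      · exact absurd hxy (G.irrefl)
      · exact absurd hvy hvc
    exact ⟨rfl, hya, rfl⟩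
  · rintro ⟨rfl, rfl, rfl⟩
    refine ⟨⟨⟨hvb, hva, hab.symm, hvc, hbc⟩, hac⟩, ?_⟩
    rw [hseq]; exact Finset.insert_comm _ _ _

set_option maxHeartbeats 1000000 in
theorem statement7 [DecidableRel G.Adj] (v : V) :
    ∑ a ∈ G.neighborFinset v, n1e G v a * n3 G v a = 2 * F5 G v + F8'' G v := by
  classical
  have key : ∑ a ∈ G.neighborFinset v, n1e G v a * n3 G v a =
      ((univ : Finset (V × V × V)).filter fun t =>
        G.Adj v t.1 ∧ G.Adj v t.2.1 ∧ G.Adj t.1 t.2.1 ∧ ¬G.Adj v t.2.2 ∧ ¬G.Adj t.1 t.2.2).card := by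
    rw [Finset.card_filter]
    rw [show (∑ t : V × V × V, if G.Adj v t.1 ∧ G.Adj v t.2.1 ∧ G.Adj t.1 t.2.1 ∧
          ¬G.Adj v t.2.2 ∧ ¬G.Adj t.1 t.2.2 then (1:ℕ) else 0) =
        ∑ a : V, ∑ b : V, ∑ c : V, if G.Adj v a ∧ G.Adj v b ∧ G.Adj a b ∧
          ¬G.Adj v c ∧ ¬G.Adj a c then (1:ℕ) else 0 by
      rw [Fintype.sum_prod_type]
      exact Finset.sum_congr rfl fun a _ => Fintype.sum_prod_type _]
    rw [SimpleGraph.neighborFinset_eq_filter, Finset.sum_filter]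
    refine Finset.sum_congr rfl fun a _ => ?_
    by_cases hva : G.Adj v a
    · simp only [if_pos hva]
      rw [n1e, n3, mul_comm, Finset.card_filter, Finset.card_filter, Finset.sum_mul_sum]
      refine Finset.sum_congr rfl fun b _ => ?_
      refine Finset.sum_congr rfl fun c _ => ?_
      rw [ite_mul_ite_eq]
      split_ifs <;> first | rfl | tauto
    · simp only [if_neg hva]
      symm
      refine Finset.sum_eq_zero fun b _ => Finset.sum_eq_zero fun c _ => ?_
      simp [hva]
  rw [key]
  rw [← Finset.card_filter_add_card_filter_not
    (p := fun t : V × V × V => G.Adj t.2.1 t.2.2) (s := (univ : Finset (V × V × V)).filter fun t =>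
        G.Adj v t.1 ∧ G.Adj v t.2.1 ∧ G.Adj t.1 t.2.1 ∧ ¬G.Adj v t.2.2 ∧ ¬G.Adj t.1 t.2.2)]
  rw [Finset.filter_filter, Finset.filter_filter]
  rw [statement7_fiber8 G v, statement7_fiber5 G v]
  ring

end FourProfiles
end

section
/- Let G be a finite simple graph with vertex set V. For every vertex v: the sum over all neighbors a of v of n2c(v,a) · n3(v,a) equals 2·F8'(v) + 2·F9'(v). -/
/-!
Expanding the product, the left side counts ordered triples `(a, b, c)` of neighbours of `v`
with `a ~ c`, `a ≁ b` and `a ≠ b`. If `b ≁ c`, then `{v, a, b, c}` is a paw whose triangle is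
`v a c`, and the paw determines the triple up to the order of `a` and `c`. If `b ~ c`, it is a
diamond whose other degree-3 vertex is `c`, and the diamond determines the triple up to the order
of `a` and `b`. So each paw and each diamond at `v` is counted exactly twice.
-/

open Finset
open scoped Classical

namespace FourProfiles

variable {V : Type*} [Fintype V] [DecidableEq V]

variable (G : SimpleGraph V)

section Orderings

variable {α : Type*} [DecidableEq α]

def orderings (a b c : α) : Finset (α × α × α) :=
  {(a, b, c), (a, c, b), (b, a, c), (b, c, a), (c, a, b), (c, b, a)}

lemma mem_orderings_of_insert_eq {a b c x y z : α} (hxy : x ≠ y) (hxz : x ≠ z) (hyz : y ≠ z)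
    (h : ({x, y, z} : Finset α) = {a, b, c}) : (x, y, z) ∈ orderings a b c := by
  have hx : x ∈ ({a, b, c} : Finset α) := h ▸ by simp
  have hy : y ∈ ({a, b, c} : Finset α) := h ▸ by simp
  have hz : z ∈ ({a, b, c} : Finset α) := h ▸ by simp
  simp only [mem_insert, mem_singleton] at hx hy hz
  rcases hx with rfl | rfl | rfl <;> rcases hy with rfl | rfl | rfl <;>
    rcases hz with rfl | rfl | rfl <;> simp_all [orderings]

lemma insert_eq_of_mem_orderings {a b c : α} {t : α × α × α} (ht : t ∈ orderings a b c) :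
    ({t.1, t.2.1, t.2.2} : Finset α) = {a, b, c} := by
  simp only [orderings, mem_insert, mem_singleton] at ht
  rcases ht with rfl | rfl | rfl | rfl | rfl | rfl <;> ext <;> simp <;> tauto

end Orderings

lemma card_distinct_triples_eq_mul_cnt3 (v : V) (P : V → V → V → Prop)
    [∀ a b c, Decidable (P a b c)] (k : ℕ) (hv : ∀ a b c, P a b c → a ≠ v ∧ b ≠ v ∧ c ≠ v)
    (hk : ∀ a b c, a ≠ b → a ≠ c → b ≠ c → P a b c →
      #{t ∈ orderings a b c | P t.1 t.2.1 t.2.2} = k) :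
    #{t : V × V × V | (t.1 ≠ t.2.1 ∧ t.1 ≠ t.2.2 ∧ t.2.1 ≠ t.2.2) ∧ P t.1 t.2.1 t.2.2} =
      k * cnt3 v P := by
  rw [cnt3, card_eq_sum_card_fiberwise
    (f := fun t : V × V × V => ({t.1, t.2.1, t.2.2} : Finset V)), sum_const_nat, mul_comm]
  · intro s hs
    simp only [mem_filter, mem_powersetCard_univ] at hs
    obtain ⟨hcard, -, a, -, b, -, c, -, rfl, habc⟩ := hs
    obtain ⟨hab, hac, hbc⟩ := card_triple_eq_three_iff.1 hcard
    rw [← hk a b c hab hac hbc habc]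
    congr 1
    ext ⟨x, y, z⟩
    simp only [mem_filter, mem_univ, true_and]
    constructor
    · rintro ⟨⟨⟨hxy, hxz, hyz⟩, hxyz⟩, h⟩
      exact ⟨mem_orderings_of_insert_eq hxy hxz hyz h, hxyz⟩
    · rintro ⟨ht, hxyz⟩
      have h := insert_eq_of_mem_orderings ht
      exact ⟨⟨card_triple_eq_three_iff.1 (h ▸ hcard), hxyz⟩, h⟩
  · rintro ⟨a, b, c⟩ habc
    simp only [coe_filter, mem_univ, true_and, Set.mem_ofPred_eq] at habc
    obtain ⟨⟨hab, hac, hbc⟩, habc⟩ := habc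
    obtain ⟨hav, hbv, hcv⟩ := hv a b c habc
    simp only [coe_filter, mem_powersetCard_univ, Set.mem_ofPred_eq]
    refine ⟨card_triple_eq_three_iff.2 ⟨hab, hac, hbc⟩, ?_, a, by simp, b, by simp, c, by simp,
      rfl, habc⟩
    simp [hav.symm, hbv.symm, hcv.symm]

section Triples

variable [DecidableRel G.Adj] (v : V)

lemma sum_n2c_mul_n3 :
    ∑ a ∈ G.neighborFinset v, n2c G v a * n3 G v a =
      #{t : V × V × V | G.Adj v t.1 ∧ (G.Adj v t.2.1 ∧ ¬G.Adj t.1 t.2.1 ∧ t.2.1 ≠ t.1) ∧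
        G.Adj v t.2.2 ∧ G.Adj t.1 t.2.2} := by
  rw [card_eq_sum_card_fiberwise (f := Prod.fst) (t := G.neighborFinset v)]
  · refine sum_congr rfl fun a ha => ?_
    rw [SimpleGraph.mem_neighborFinset] at ha
    rw [n2c, n3, ← card_product]
    refine card_nbij' (fun p => (a, p)) Prod.snd ?_ ?_ (fun _ _ => rfl) ?_ <;>
      rintro ⟨x, p⟩ <;> aesop
  · intro t ht
    simp_all

lemma two_mul_F8' :
    2 * F8' G v = #{t : V × V × V | (t.1 ≠ t.2.1 ∧ t.1 ≠ t.2.2 ∧ t.2.1 ≠ t.2.2) ∧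
      G.Adj v t.1 ∧ G.Adj v t.2.1 ∧ G.Adj t.1 t.2.1 ∧ G.Adj v t.2.2 ∧ ¬G.Adj t.1 t.2.2 ∧
      ¬G.Adj t.2.1 t.2.2} := by
  refine (card_distinct_triples_eq_mul_cnt3 v _ 2 ?_ ?_).symm
  · rintro a b c ⟨hva, hvb, -, hvc, -⟩
    exact ⟨hva.ne', hvb.ne', hvc.ne'⟩
  · rintro a b c - - - ⟨hva, hvb, hab, hvc, hac, hbc⟩
    have : (a, b, c) ≠ (b, a, c) := by simp [hab.ne]
    simp [orderings, filter_insert, filter_singleton, G.adj_comm, *]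

lemma two_mul_F9' :
    2 * F9' G v = #{t : V × V × V | (t.1 ≠ t.2.1 ∧ t.1 ≠ t.2.2 ∧ t.2.1 ≠ t.2.2) ∧
      G.Adj v t.1 ∧ G.Adj v t.2.1 ∧ G.Adj v t.2.2 ∧ G.Adj t.1 t.2.1 ∧ G.Adj t.1 t.2.2 ∧
      ¬G.Adj t.2.1 t.2.2} := by
  refine (card_distinct_triples_eq_mul_cnt3 v _ 2 ?_ ?_).symm
  · rintro a b c ⟨hva, hvb, hvc, -⟩
    exact ⟨hva.ne', hvb.ne', hvc.ne'⟩
  · rintro a b c - - hbc_ne ⟨hva, hvb, hvc, hab, hac, hbc⟩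
    have : (a, b, c) ≠ (a, c, b) := by simp [hbc_ne]
    simp [orderings, filter_insert, filter_singleton, G.adj_comm, *]

end Triples

theorem statement9 [DecidableRel G.Adj] (v : V) :
    ∑ a ∈ G.neighborFinset v, n2c G v a * n3 G v a = 2 * F8' G v + 2 * F9' G v := by
  rw [sum_n2c_mul_n3, two_mul_F8', two_mul_F9',
    ← card_filter_add_card_filter_not (fun t : V × V × V => G.Adj t.2.1 t.2.2), filter_filter,
    filter_filter, add_comm]
  congr 1
  · -- `(a, b, c) ↦ (a, c, b)`
    refine card_equiv ((Equiv.refl V).prodCongr (Equiv.prodComm V V)) fun ⟨a, b, c⟩ => ?_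
    simp only [ne_eq, mem_filter, mem_univ, true_and, Equiv.prodCongr_apply, Equiv.coe_refl,
      Equiv.coe_prodComm, Prod.map_apply, id_eq, Prod.swap_prod_mk]
    grind [SimpleGraph.irrefl, SimpleGraph.adj_comm]
  · -- `(a, b, c) ↦ (c, a, b)`
    refine card_equiv ((Equiv.prodAssoc V V V).symm.trans (Equiv.prodComm _ _))
      fun ⟨a, b, c⟩ => ?_
    simp only [ne_eq, mem_filter, mem_univ, true_and, Equiv.trans_apply,
      Equiv.prodAssoc_symm_apply, Equiv.prodComm_apply, Prod.swap_prod_mk]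
    grind [SimpleGraph.irrefl, SimpleGraph.adj_comm]

end FourProfiles
end

section
/- Let G be a finite simple graph with vertex set V. For every vertex v: the sum over all neighbors a of v of n1e(v,a) · n2e(v,a) equals F3(v) + F4(v). -/
open Finset
open scoped Classical

namespace FourProfiles

variable {V : Type*} [Fintype V] [DecidableEq V]

variable (G : SimpleGraph V)

lemma label_unique {G : SimpleGraph V} {v a b c a' b' c' : V}
    (hset : ({a, b, c} : Finset V) = {a', b', c'})
    (hva : G.Adj v a) (hab : G.Adj a b) (_hvb : ¬G.Adj v b) (hvc : ¬G.Adj v c)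
    (hac : ¬G.Adj a c)
    (hva' : G.Adj v a') (hab' : G.Adj a' b') (hvb' : ¬G.Adj v b') (hvc' : ¬G.Adj v c')
    (hac' : ¬G.Adj a' c') :
    a' = a ∧ b' = b ∧ c' = c := by
  have ha' : a' ∈ ({a, b, c} : Finset V) := by rw [hset]; simp
  have hvb := _hvb
  have haa : a' = a := by
    rcases Finset.mem_insert.mp ha' with h | h
    · exact h
    rcases Finset.mem_insert.mp h with h | h
    · exact absurd (h ▸ hva') hvb
    · exact absurd ((Finset.mem_singleton.mp h) ▸ hva') hvc
  subst haa
  have hb' : b' ∈ ({a', b, c} : Finset V) := by rw [hset]; simp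
  have hbb : b' = b := by
    rcases Finset.mem_insert.mp hb' with h | h
    · exact absurd (h ▸ hab') (G.irrefl)
    rcases Finset.mem_insert.mp h with h | h
    · exact h
    · exact absurd ((Finset.mem_singleton.mp h) ▸ hab') hac
  have hcc : c' = c := by
    have hc' : c' ∈ ({a', b, c} : Finset V) := by rw [hset]; simp
    rcases Finset.mem_insert.mp hc' with h | h
    · exact absurd (h ▸ hva') hvc'
    rcases Finset.mem_insert.mp h with h | h
    · exact absurd hab (h ▸ hac')
    · exact Finset.mem_singleton.mp h
  exact ⟨rfl, hbb, hcc⟩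

set_option maxHeartbeats 1000000 in
theorem statement12 [DecidableRel G.Adj] (v : V) :
    ∑ a ∈ G.neighborFinset v, n1e G v a * n2e G v a = F3 G v + F4 G v := by
  classical
  have h1 : ∀ a, n1e G v a * n2e G v a =
      (((univ : Finset V).filter fun c => ¬G.Adj v c ∧ ¬G.Adj a c) ×ˢ
       ((univ : Finset V).filter fun b => G.Adj a b ∧ ¬G.Adj v b ∧ b ≠ v)).card := by
    intro a
    rw [Finset.card_product]
    unfold n1e n2e
    congr 1 <;> (apply congrArg; ext x; simp)
  rw [Finset.sum_congr rfl fun a _ => h1 a, ← Finset.card_sigma]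
  set S := (G.neighborFinset v).sigma
    (fun a => (((univ : Finset V).filter fun c => ¬G.Adj v c ∧ ¬G.Adj a c) ×ˢ
       ((univ : Finset V).filter fun b => G.Adj a b ∧ ¬G.Adj v b ∧ b ≠ v))) with hS
  have hmem : ∀ x : (_ : V) × V × V, x ∈ S ↔
      G.Adj v x.1 ∧ (¬G.Adj v x.2.1 ∧ ¬G.Adj x.1 x.2.1) ∧
      (G.Adj x.1 x.2.2 ∧ ¬G.Adj v x.2.2 ∧ x.2.2 ≠ v) := by
    intro x
    simp [hS, Finset.mem_sigma, Finset.mem_product, SimpleGraph.mem_neighborFinset,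
      Finset.mem_filter]
  have hsplit := Finset.card_filter_add_card_filter_not
    (s := S) (p := fun x => G.Adj x.2.2 x.2.1)
  have h4 : (S.filter fun x => G.Adj x.2.2 x.2.1).card = F4 G v := by
    unfold F4 cnt3
    apply Finset.card_bij (fun x _ => ({x.1, x.2.2, x.2.1} : Finset V))
    · rintro ⟨a, c, b⟩ hx
      simp only [Finset.mem_filter] at hx
      obtain ⟨hx, hbc⟩ := hx
      rw [hmem] at hx
      obtain ⟨hva, ⟨hvc, hac⟩, hab, hvb, hbv⟩ := hx
      simp only at hva hvc hac hab hvb hbv hbc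
      have hnab : a ≠ b := G.ne_of_adj hab
      have hnac : a ≠ c := fun h => hvc (h ▸ hva)
      have hnbc : b ≠ c := G.ne_of_adj hbc
      have hcard : ({a, b, c} : Finset V).card = 3 :=
        Finset.card_eq_three.mpr ⟨a, b, c, hnab, hnac, hnbc, rfl⟩
      simp only [Finset.mem_filter, Finset.mem_powersetCard]
      refine ⟨⟨Finset.subset_univ _, hcard⟩, ?_, a, ?_, b, ?_, c, ?_, rfl,
        hva, hab, hbc, hvb, hvc, hac⟩
      · intro hv
        rcases Finset.mem_insert.mp hv with h | h
        · exact G.irrefl (h ▸ hva)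
        rcases Finset.mem_insert.mp h with h | h
        · exact hbv h.symm
        · exact hac ((Finset.mem_singleton.mp h) ▸ hva.symm)
      · simp
      · simp
      · simp
    · rintro ⟨a, c, b⟩ hx ⟨a', c', b'⟩ hx' heq
      simp only [Finset.mem_filter] at hx hx'
      obtain ⟨hx, hbc⟩ := hx
      obtain ⟨hx', hbc'⟩ := hx'
      rw [hmem] at hx hx'
      obtain ⟨hva, ⟨hvc, hac⟩, hab, hvb, hbv⟩ := hx
      obtain ⟨hva', ⟨hvc', hac'⟩, hab', hvb', hbv'⟩ := hx'
      simp only at hva hvc hac hab hvb hbv hva' hvc' hac' hab' hvb' hbv' heq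
      obtain ⟨e1, e2, e3⟩ := label_unique heq hva hab hvb hvc hac hva' hab' hvb' hvc' hac'
      simp [e1, e2, e3]
    · intro s hs
      simp only [Finset.mem_filter] at hs
      obtain ⟨hp, hvs, a, has, b, hbs, c, hcs, hsabc, hva, hab, hbc, hvb, hvc, hac⟩ := hs
      refine ⟨⟨a, c, b⟩, ?_, hsabc.symm⟩
      simp only [Finset.mem_filter]
      rw [hmem]
      exact ⟨⟨hva, ⟨hvc, hac⟩, hab, hvb, fun h => hvs (h ▸ hbs)⟩, hbc⟩
  have h3 : (S.filter fun x => ¬G.Adj x.2.2 x.2.1).card = F3 G v := by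
    unfold F3 cnt3
    apply Finset.card_bij (fun x _ => ({x.1, x.2.2, x.2.1} : Finset V))
    · rintro ⟨a, c, b⟩ hx
      simp only [Finset.mem_filter] at hx
      obtain ⟨hx, hbc⟩ := hx
      rw [hmem] at hx
      obtain ⟨hva, ⟨hvc, hac⟩, hab, hvb, hbv⟩ := hx
      simp only at hva hvc hac hab hvb hbv hbc
      have hnab : a ≠ b := G.ne_of_adj hab
      have hnac : a ≠ c := fun h => hvc (h ▸ hva)
      have hnbc : b ≠ c := fun h => hac (h ▸ hab)
      have hcard : ({a, b, c} : Finset V).card = 3 :=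
        Finset.card_eq_three.mpr ⟨a, b, c, hnab, hnac, hnbc, rfl⟩
      simp only [Finset.mem_filter, Finset.mem_powersetCard]
      refine ⟨⟨Finset.subset_univ _, hcard⟩, ?_, a, ?_, b, ?_, c, ?_, rfl,
        hva, hab, hvb, hvc, hac, hbc⟩
      · intro hv
        rcases Finset.mem_insert.mp hv with h | h
        · exact G.irrefl (h ▸ hva)
        rcases Finset.mem_insert.mp h with h | h
        · exact hbv h.symm
        · exact hac ((Finset.mem_singleton.mp h) ▸ hva.symm)
      · simp
      · simp
      · simp
    · rintro ⟨a, c, b⟩ hx ⟨a', c', b'⟩ hx' heq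
      simp only [Finset.mem_filter] at hx hx'
      obtain ⟨hx, hbc⟩ := hx
      obtain ⟨hx', hbc'⟩ := hx'
      rw [hmem] at hx hx'
      obtain ⟨hva, ⟨hvc, hac⟩, hab, hvb, hbv⟩ := hx
      obtain ⟨hva', ⟨hvc', hac'⟩, hab', hvb', hbv'⟩ := hx'
      simp only at hva hvc hac hab hvb hbv hva' hvc' hac' hab' hvb' hbv' heq
      obtain ⟨e1, e2, e3⟩ := label_unique heq hva hab hvb hvc hac hva' hab' hvb' hvc' hac'
      simp [e1, e2, e3]
    · intro s hs
      simp only [Finset.mem_filter] at hs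
      obtain ⟨hp, hvs, a, has, b, hbs, c, hcs, hsabc, hva, hab, hvb, hvc, hac, hbc⟩ := hs
      refine ⟨⟨a, c, b⟩, ?_, hsabc.symm⟩
      simp only [Finset.mem_filter]
      rw [hmem]
      exact ⟨⟨hva, ⟨hvc, hac⟩, hab, hvb, fun h => hvs (h ▸ hbs)⟩, hbc⟩
  omega

end FourProfiles
end
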